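/- arXiv:2009.07721 — 3 statements merged into one kernel-verified Lean document; each statement's English description precedes it below -/
import Mathlib

section
/- Sufficient optimality condition for the k-th order differential inclusion (Theorem 3.1). Assume the graph {(x,v) : v ∈ F(x,t)} is convex for each t ∈ [0,T], f : ℝⁿ × ℝⁿ → ℝ is convex, S is convex, and X(t) is convex for every t ∈ [0,T]. Let (x̃, ṽ) be a feasible solution of order k, let (x*, w) be an adjoint arc of order k, and let v* : [0,T] → ℝⁿ satisfy: (a)–(b) for a.e. t ∈ [0,T], ⟨y − x̃(t), v*(t)⟩ ≥ 0 for all y ∈ X(t), and ⟨v − ṽ(t), x*(t)⟩ ≤ ⟨(−1)^k w(t) − v*(t), x − x̃(t)⟩ for every x ∈ ℝⁿ and every v ∈ F(x,t); (c) there exist p ∈ ∂f(x̃(0), x̃(T)) and μ* ∈ K_S*(x̃(0), x̃(T)) with ((−1)^{k−1} x*^{(k−1)}(0), (−1)^k x*^{(k−1)}(T)) = p − μ*; (d) for every j = 0,…,k−2, ((−1)^{j+1} x*^{(j)}(0), (−1)^j x*^{(j)}(T)) ∈ K_S*(x̃^{(k−j−1)}(0), x̃^{(k−j−1)}(T)).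 Then f(x(0), x(T)) ≥ f(x̃(0), x̃(T)) for every feasible solution (x, v) of order k. -/
/-!
For a feasible `(x, v)` put `Δ = x - x̃`. Integrating `⟨Δ⁽ᵏ⁾, x*⟩` by parts `k` times moves all
derivatives onto the adjoint arc, and condition (a)–(b) bounds the result: the boundary terms
`∑ⱼ (-1)ʲ [⟨Δ⁽ᵏ⁻¹⁻ʲ⁾, x*⁽ʲ⁾⟩]₀ᵀ` sum to a nonpositive number. Condition (d) makes every term with
`j < k - 1` nonnegative, so the last one, `(-1)ᵏ⁻¹ [⟨Δ, x*⁽ᵏ⁻¹⁾⟩]₀ᵀ`, is nonpositive. By (c)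
the subgradient inequality for `f` at the endpoints of `x̃` then bounds
`f (x 0) (x T) - f (x̃ 0) (x̃ T)` below by this term with its sign reversed plus a dual-cone
pairing, both nonnegative.
-/

open MeasureTheory Matrix Set

/-- A feasible solution of order `k` for the problem (PHC): `x` is `(k-1)`-times
differentiable, `v` (playing the role of `x⁽ᵏ⁾`) is integrable,
`x⁽ᵏ⁻¹⁾(t) = x⁽ᵏ⁻¹⁾(0) + ∫₀ᵗ v`, `v(t) ∈ F(x(t),t)` a.e., the endpoint pairs lie in `S`
and the state constraint `x(t) ∈ X(t)` holds. -/
def IsFeasible (n k : ℕ) (T : ℝ)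
    (F : (Fin n → ℝ) → ℝ → Set (Fin n → ℝ))
    (S : Set ((Fin n → ℝ) × (Fin n → ℝ)))
    (X : ℝ → Set (Fin n → ℝ))
    (x v : ℝ → (Fin n → ℝ)) : Prop :=
  (∀ j < k - 1, Differentiable ℝ (iteratedDeriv j x)) ∧
  IntervalIntegrable v volume 0 T ∧
  (∀ t ∈ Icc (0:ℝ) T,
      iteratedDeriv (k-1) x t = iteratedDeriv (k-1) x 0 + ∫ s in (0:ℝ)..t, v s) ∧
  (∀ᵐ t ∂volume, t ∈ Icc (0:ℝ) T → v t ∈ F (x t) t) ∧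
  (∀ j < k, (iteratedDeriv j x 0, iteratedDeriv j x T) ∈ S) ∧
  (∀ t ∈ Icc (0:ℝ) T, x t ∈ X t)

/-- An adjoint arc of order `k`: `x*` is `(k-1)`-times differentiable and
`x*⁽ᵏ⁻¹⁾(t) = x*⁽ᵏ⁻¹⁾(0) + ∫₀ᵗ w` with `w` integrable. -/
def IsAdjointArc (n k : ℕ) (T : ℝ) (xs w : ℝ → (Fin n → ℝ)) : Prop :=
  (∀ j < k - 1, Differentiable ℝ (iteratedDeriv j xs)) ∧
  IntervalIntegrable w volume 0 T ∧
  (∀ t ∈ Icc (0:ℝ) T,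
      iteratedDeriv (k-1) xs t = iteratedDeriv (k-1) xs 0 + ∫ s in (0:ℝ)..t, w s)

section Primitive

variable {E G : Type*} [NormedAddCommGroup E] [NormedAddCommGroup G] {T : ℝ}

lemma IntervalIntegrable.mono_of_mem_Icc {u : ℝ → E} (hT : 0 ≤ T)
    (hu : IntervalIntegrable u volume 0 T) {t : ℝ} (ht : t ∈ Icc (0:ℝ) T) : IntervalIntegrable u volume 0 t :=
  hu.mono_set (uIcc_subset_uIcc left_mem_uIcc (by rwa [uIcc_of_le hT]))

variable [NormedSpace ℝ E] [NormedSpace ℝ G]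

def IsPrimitiveOn (T : ℝ) (g u : ℝ → E) : Prop :=
  ∀ t ∈ Icc (0:ℝ) T, g t = g 0 + ∫ s in (0:ℝ)..t, u s

lemma IsPrimitiveOn.continuousOn {g u : ℝ → E} (hT : 0 ≤ T)
    (hu : IntervalIntegrable u volume 0 T) (hg : IsPrimitiveOn T g u) :
    ContinuousOn g (Icc 0 T) := by
  have := continuousOn_const (c := g 0) |>.add
    (intervalIntegral.continuousOn_primitive_interval' hu left_mem_uIcc)
  rw [uIcc_of_le hT] at this
  exact this.congr hg

lemma IsPrimitiveOn.sub {g h u m : ℝ → E} (hT : 0 ≤ T) (hu : IntervalIntegrable u volume 0 T)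
    (hm : IntervalIntegrable m volume 0 T) (hg : IsPrimitiveOn T g u) (hh : IsPrimitiveOn T h m) :
    IsPrimitiveOn T (g - h) (u - m) := fun t ht => by
  simp only [Pi.sub_apply, hg t ht, hh t ht,
    intervalIntegral.integral_sub (hu.mono_of_mem_Icc hT ht) (hm.mono_of_mem_Icc hT ht)]
  abel

lemma IsPrimitiveOn.clm_comp [CompleteSpace E] [CompleteSpace G] {g u : ℝ → E} (hT : 0 ≤ T)
    (hu : IntervalIntegrable u volume 0 T) (hg : IsPrimitiveOn T g u) (L : E →L[ℝ] G) :
    IsPrimitiveOn T (fun t => L (g t)) (fun t => L (u t)) := fun t ht => by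
  simp only
  rw [hg t ht, map_add, L.intervalIntegral_comp_comm (hu.mono_of_mem_Icc hT ht)]

end Primitive

lemma IsPrimitiveOn.integral_mul_add_mul {T : ℝ} {P Q u m : ℝ → ℝ} (hT : 0 ≤ T)
    (hu : IntervalIntegrable u volume 0 T) (hm : IntervalIntegrable m volume 0 T)
    (hP : IsPrimitiveOn T P u) (hQ : IsPrimitiveOn T Q m) :
    ∫ t in (0:ℝ)..T, (u t * Q t + P t * m t) = P T * Q T - P 0 * Q 0 := by
  set P' : ℝ → ℝ := fun t => (∫ s in (0:ℝ)..t, u s) + P 0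
  set Q' : ℝ → ℝ := fun t => (∫ s in (0:ℝ)..t, m s) + Q 0
  have hP' : AbsolutelyContinuousOnInterval P' 0 T :=
    (hu.absolutelyContinuousOnInterval_intervalIntegral left_mem_uIcc).fun_add
      (contDiffOn_const (c := P 0)).absolutelyContinuousOnInterval
  have hQ' : AbsolutelyContinuousOnInterval Q' 0 T :=
    (hm.absolutelyContinuousOnInterval_intervalIntegral left_mem_uIcc).fun_add
      (contDiffOn_const (c := Q 0)).absolutelyContinuousOnInterval
  have hPeq : EqOn P P' (Icc 0 T) := fun t ht => by rw [hP t ht, add_comm]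
  have hQeq : EqOn Q Q' (Icc 0 T) := fun t ht => by rw [hQ t ht, add_comm]
  calc ∫ t in (0:ℝ)..T, (u t * Q t + P t * m t)
      = ∫ t in (0:ℝ)..T, (deriv P' t * Q' t + P' t * deriv Q' t) := by
        refine intervalIntegral.integral_congr_ae ?_
        filter_upwards [hu.ae_hasDerivAt_integral, hm.ae_hasDerivAt_integral] with t hut hmt ht
        have ht' : t ∈ Icc 0 T := by rw [uIoc_of_le hT] at ht; exact Ioc_subset_Icc_self ht
        have htu : t ∈ uIcc 0 T := by rwa [uIcc_of_le hT]
        rw [((hut htu 0 left_mem_uIcc).add_const (P 0)).deriv,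
          ((hmt htu 0 left_mem_uIcc).add_const (Q 0)).deriv, hPeq ht', hQeq ht']
    _ = P' T * Q' T - P' 0 * Q' 0 := hP'.integral_deriv_mul_eq_sub hQ'
    _ = P T * Q T - P 0 * Q 0 := by
        rw [hPeq (right_mem_Icc.2 hT), hQeq (right_mem_Icc.2 hT), hPeq (left_mem_Icc.2 hT),
          hQeq (left_mem_Icc.2 hT)]

section DotProduct

variable {ι : Type*} [Fintype ι] {T : ℝ}

lemma IntervalIntegrable.eval {E : ι → Type*} [∀ i, NormedAddCommGroup (E i)] {f : ℝ → Π i, E i}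
    {a b : ℝ} (hf : IntervalIntegrable f volume a b) (i : ι) :
    IntervalIntegrable (f · i) volume a b :=
  ⟨hf.1.eval i, hf.2.eval i⟩

lemma IntervalIntegrable.dotProduct_continuousOn {f g : ℝ → ι → ℝ} {a b : ℝ}
    (hf : IntervalIntegrable f volume a b) (hg : ContinuousOn g (uIcc a b)) :
    IntervalIntegrable (fun t => f t ⬝ᵥ g t) volume a b := by
  have := IntervalIntegrable.sum Finset.univ fun i _ =>
    (hf.eval i).mul_continuousOn ((continuous_apply i).comp_continuousOn hg)
  simp only [Finset.sum_fn, Function.comp_apply] at this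
  exact this

lemma IntervalIntegrable.continuousOn_dotProduct {f g : ℝ → ι → ℝ} {a b : ℝ}
    (hf : IntervalIntegrable f volume a b) (hg : ContinuousOn g (uIcc a b)) :
    IntervalIntegrable (fun t => g t ⬝ᵥ f t) volume a b := by
  simpa only [dotProduct_comm] using hf.dotProduct_continuousOn hg

lemma IsPrimitiveOn.eval {g u : ℝ → ι → ℝ} (hT : 0 ≤ T) (hu : IntervalIntegrable u volume 0 T)
    (hg : IsPrimitiveOn T g u) (i : ι) : IsPrimitiveOn T (g · i) (u · i) :=
  hg.clm_comp hT hu (ContinuousLinearMap.proj i)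

lemma IsPrimitiveOn.integral_dotProduct_add_dotProduct {g h u m : ℝ → ι → ℝ} (hT : 0 ≤ T)
    (hu : IntervalIntegrable u volume 0 T) (hm : IntervalIntegrable m volume 0 T)
    (hg : IsPrimitiveOn T g u) (hh : IsPrimitiveOn T h m) :
    ∫ t in (0:ℝ)..T, (u t ⬝ᵥ h t + g t ⬝ᵥ m t) = g T ⬝ᵥ h T - g 0 ⬝ᵥ h 0 := by
  have hgc := hg.continuousOn hT hu
  have hhc := hh.continuousOn hT hm
  rw [← uIcc_of_le hT] at hgc hhc
  have hsum : ∀ t, u t ⬝ᵥ h t + g t ⬝ᵥ m t = ∑ i, (u t i * h t i + g t i * m t i) := fun t => by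
    simp only [dotProduct, Finset.sum_add_distrib]
  simp only [hsum]
  have hint : ∀ i ∈ Finset.univ,
      IntervalIntegrable (fun t => u t i * h t i + g t i * m t i) volume 0 T := fun i _ =>
    ((hu.eval i).mul_continuousOn ((continuous_apply i).comp_continuousOn hhc)).add
      ((hm.eval i).continuousOn_mul ((continuous_apply i).comp_continuousOn hgc))
  rw [intervalIntegral.integral_finsetSum hint]
  simp only [fun i => (hg.eval hT hu i).integral_mul_add_mul hT (hu.eval i) (hm.eval i)
    (hh.eval hT hm i), dotProduct, Finset.sum_sub_distrib]

end DotProduct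

section Chain

variable {E : Type*} [NormedAddCommGroup E] [NormedSpace ℝ E] {T : ℝ} {k : ℕ}

def IsPrimitiveChain (T : ℝ) (k : ℕ) (g : ℕ → ℝ → E) : Prop :=
  ∀ j < k, IntervalIntegrable (g (j + 1)) volume 0 T ∧ IsPrimitiveOn T (g j) (g (j + 1))

lemma IsPrimitiveChain.sub {g h : ℕ → ℝ → E} (hT : 0 ≤ T) (hg : IsPrimitiveChain T k g)
    (hh : IsPrimitiveChain T k h) : IsPrimitiveChain T k (g - h) := fun j hj =>
  ⟨(hg j hj).1.sub (hh j hj).1, (hg j hj).2.sub hT (hg j hj).1 (hh j hj).1 (hh j hj).2⟩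

lemma IsPrimitiveChain.continuousOn {g : ℕ → ℝ → E} (hT : 0 ≤ T) (hg : IsPrimitiveChain T k g)
    {j : ℕ} (hj : j < k) : ContinuousOn (g j) (uIcc 0 T) := by
  rw [uIcc_of_le hT]
  exact (hg j hj).2.continuousOn hT (hg j hj).1

end Chain

section ChainDotProduct

variable {ι : Type*} [Fintype ι] {T : ℝ}

lemma IsPrimitiveChain.intervalIntegrable_dotProduct {k : ℕ} {g z : ℕ → ℝ → ι → ℝ} (hT : 0 ≤ T)
    (hk : k ≠ 0) (hg : IsPrimitiveChain T k g) (hz : IsPrimitiveChain T k z) :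
    IntervalIntegrable (fun t => g k t ⬝ᵥ z 0 t) volume 0 T := by
  obtain ⟨k, rfl⟩ := Nat.exists_eq_succ_of_ne_zero hk
  exact (hg k k.lt_succ_self).1.dotProduct_continuousOn (hz.continuousOn hT k.succ_pos)

theorem IsPrimitiveChain.integral_dotProduct_eq {g : ℕ → ℝ → ι → ℝ} (hT : 0 ≤ T) :
    ∀ {k : ℕ} {z : ℕ → ℝ → ι → ℝ}, IsPrimitiveChain T k g → IsPrimitiveChain T k z →
    ∫ t in (0:ℝ)..T, g k t ⬝ᵥ z 0 t
      = ∑ j ∈ Finset.range k, (-1:ℝ) ^ j * (g (k - 1 - j) T ⬝ᵥ z j T - g (k - 1 - j) 0 ⬝ᵥ z j 0)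
        + (-1:ℝ) ^ k * ∫ t in (0:ℝ)..T, g 0 t ⬝ᵥ z k t
  | 0, _, _, _ => by simp
  | k + 1, z, hg, hz => by
    have ih := integral_dotProduct_eq hT (k := k) (z := fun j => z (j + 1))
      (fun j hj => hg j (by omega)) (fun j hj => hz (j + 1) (by omega))
    have ibp := (hg k k.lt_succ_self).2.integral_dotProduct_add_dotProduct hT
      (hg k k.lt_succ_self).1 (hz 0 k.succ_pos).1 (hz 0 k.succ_pos).2
    rw [intervalIntegral.integral_add (hg.intervalIntegrable_dotProduct hT k.succ_ne_zero hz)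
      ((hz 0 k.succ_pos).1.continuousOn_dotProduct (hg.continuousOn hT k.lt_succ_self))] at ibp
    rw [Finset.sum_range_succ', pow_succ]
    have hshift : ∀ j ∈ Finset.range k, (-1:ℝ) ^ (j + 1) *
        (g (k + 1 - 1 - (j + 1)) T ⬝ᵥ z (j + 1) T - g (k + 1 - 1 - (j + 1)) 0 ⬝ᵥ z (j + 1) 0)
        = -((-1:ℝ) ^ j * (g (k - 1 - j) T ⬝ᵥ z (j + 1) T - g (k - 1 - j) 0 ⬝ᵥ z (j + 1) 0)) :=
      fun j _ => by rw [show k + 1 - 1 - (j + 1) = k - 1 - j by omega, pow_succ]; ring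
    rw [Finset.sum_congr rfl hshift, Finset.sum_neg_distrib]
    simp only [Nat.add_sub_cancel, Nat.sub_zero, pow_zero, one_mul] at ih ⊢
    linarith

end ChainDotProduct

section DerivChain

variable {E : Type*} [NormedAddCommGroup E] [NormedSpace ℝ E] {T : ℝ} {k : ℕ}

/-- `x, x', …, x⁽ᵏ⁻¹⁾, v`: an arc of order `k` need not have a `k`-th derivative, so `v` stands
in for it. -/
noncomputable def derivChain (k : ℕ) (x v : ℝ → E) : ℕ → ℝ → E :=
  Function.update (fun j => iteratedDeriv j x) k v

@[simp]
lemma derivChain_self (x v : ℝ → E) : derivChain k x v k = v :=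
  Function.update_self ..

lemma derivChain_of_ne {x v : ℝ → E} {j : ℕ} (hj : j ≠ k) :
    derivChain k x v j = iteratedDeriv j x :=
  Function.update_of_ne hj ..

lemma isPrimitiveChain_derivChain [CompleteSpace E] (hT : 0 ≤ T) {x v : ℝ → E}
    (hdiff : ∀ j < k - 1, Differentiable ℝ (iteratedDeriv j x))
    (hv : IntervalIntegrable v volume 0 T) (hrep : IsPrimitiveOn T (iteratedDeriv (k - 1) x) v) :
    IsPrimitiveChain T k (derivChain k x v) := by
  intro j hj
  rw [derivChain_of_ne hj.ne]
  obtain rfl | hjk := (show j + 1 ≤ k from hj).eq_or_lt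
  · rw [derivChain_self]
    exact ⟨hv, hrep⟩
  rw [derivChain_of_ne hjk.ne]
  have hcont : ContinuousOn (iteratedDeriv (j + 1) x) (uIcc 0 T) := by
    obtain hjk' | hjk' := (show j + 1 ≤ k - 1 by omega).eq_or_lt
    · rw [hjk', uIcc_of_le hT]
      exact hrep.continuousOn hT hv
    · exact (hdiff (j + 1) hjk').continuous.continuousOn
  refine ⟨hcont.intervalIntegrable, fun t ht => ?_⟩
  rw [iteratedDeriv_succ, intervalIntegral.integral_deriv_eq_sub
    (fun s _ => (hdiff j (by omega)).differentiableAt)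
    (by rw [← iteratedDeriv_succ]; exact hcont.intervalIntegrable.mono_of_mem_Icc hT ht)]
  abel

end DerivChain

lemma IsFeasible.isPrimitiveChain {n k : ℕ} {T : ℝ} {F : (Fin n → ℝ) → ℝ → Set (Fin n → ℝ)}
    {S : Set ((Fin n → ℝ) × (Fin n → ℝ))} {X : ℝ → Set (Fin n → ℝ)} {x v : ℝ → Fin n → ℝ}
    (hT : 0 ≤ T) (h : IsFeasible n k T F S X x v) : IsPrimitiveChain T k (derivChain k x v) :=
  isPrimitiveChain_derivChain hT h.1 h.2.1 h.2.2.1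

lemma IsAdjointArc.isPrimitiveChain {n k : ℕ} {T : ℝ} {xs w : ℝ → Fin n → ℝ} (hT : 0 ≤ T)
    (h : IsAdjointArc n k T xs w) : IsPrimitiveChain T k (derivChain k xs w) :=
  isPrimitiveChain_derivChain hT h.1 h.2.1 h.2.2

lemma IsPrimitiveChain.sum_boundary_nonpos {ι : Type*} [Fintype ι] {T : ℝ} {k : ℕ}
    {g z : ℕ → ℝ → ι → ℝ} (hT : 0 ≤ T) (hk : k ≠ 0) (hg : IsPrimitiveChain T k g)
    (hz : IsPrimitiveChain T k z)
    (hle : ∀ᵐ t, t ∈ Icc 0 T → g k t ⬝ᵥ z 0 t ≤ (-1:ℝ) ^ k * (g 0 t ⬝ᵥ z k t)) :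
    ∑ j ∈ Finset.range k, (-1:ℝ) ^ j * (g (k - 1 - j) T ⬝ᵥ z j T - g (k - 1 - j) 0 ⬝ᵥ z j 0)
      ≤ 0 := by
  have hint : IntervalIntegrable (fun t => g 0 t ⬝ᵥ z k t) volume 0 T := by
    simpa only [dotProduct_comm] using hz.intervalIntegrable_dotProduct hT hk hg
  have hmono := intervalIntegral.integral_mono_ae_restrict hT
    (hg.intervalIntegrable_dotProduct hT hk hz) (hint.const_mul ((-1:ℝ) ^ k))
    ((ae_restrict_iff' measurableSet_Icc).2 hle)
  rw [intervalIntegral.integral_const_mul, hg.integral_dotProduct_eq hT hz] at hmono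
  linarith

lemma IsFeasible.ae_dotProduct_le {n k : ℕ} {T : ℝ} {F : (Fin n → ℝ) → ℝ → Set (Fin n → ℝ)}
    {S : Set ((Fin n → ℝ) × (Fin n → ℝ))} {X : ℝ → Set (Fin n → ℝ)}
    {x v xt vt xs w vs : ℝ → Fin n → ℝ} (hx : IsFeasible n k T F S X x v)
    (hab : ∀ᵐ t ∂volume, t ∈ Icc (0:ℝ) T →
      (∀ y ∈ X t, 0 ≤ (y - xt t) ⬝ᵥ vs t) ∧
      (∀ ξ η, η ∈ F ξ t →
        (η - vt t) ⬝ᵥ xs t ≤ (((-1:ℝ)^k • w t - vs t) ⬝ᵥ (ξ - xt t)))) :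
    ∀ᵐ t, t ∈ Icc 0 T → (v t - vt t) ⬝ᵥ xs t ≤ (-1:ℝ) ^ k * ((x t - xt t) ⬝ᵥ w t) := by
  obtain ⟨-, -, -, hxF, -, hxX⟩ := hx
  filter_upwards [hab, hxF] with t habt hF ht
  have hstate := (habt ht).1 (x t) (hxX t ht)
  have hdyn := (habt ht).2 (x t) (v t) (hF ht)
  rw [sub_dotProduct ((-1:ℝ) ^ k • w t), smul_dotProduct, smul_eq_mul, dotProduct_comm (w t),
    dotProduct_comm (vs t)] at hdyn
  linarith

lemma IsFeasible.sum_boundary_nonpos {n k : ℕ} {T : ℝ} {F : (Fin n → ℝ) → ℝ → Set (Fin n → ℝ)}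
    {S : Set ((Fin n → ℝ) × (Fin n → ℝ))} {X : ℝ → Set (Fin n → ℝ)}
    {x v xt vt xs w vs : ℝ → Fin n → ℝ} (hT : 0 ≤ T) (hk : k ≠ 0)
    (hx : IsFeasible n k T F S X x v) (hxt : IsFeasible n k T F S X xt vt)
    (hadj : IsAdjointArc n k T xs w)
    (hab : ∀ᵐ t ∂volume, t ∈ Icc (0:ℝ) T →
      (∀ y ∈ X t, 0 ≤ (y - xt t) ⬝ᵥ vs t) ∧
      (∀ ξ η, η ∈ F ξ t →
        (η - vt t) ⬝ᵥ xs t ≤ (((-1:ℝ)^k • w t - vs t) ⬝ᵥ (ξ - xt t)))) :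
    ∑ j ∈ Finset.range k, (-1:ℝ) ^ j *
      ((iteratedDeriv (k - 1 - j) x T - iteratedDeriv (k - 1 - j) xt T) ⬝ᵥ iteratedDeriv j xs T
        - (iteratedDeriv (k - 1 - j) x 0 - iteratedDeriv (k - 1 - j) xt 0) ⬝ᵥ iteratedDeriv j xs 0)
      ≤ 0 := by
  refine le_of_eq_of_le (Finset.sum_congr rfl fun j hj => ?_)
    (((hx.isPrimitiveChain hT).sub hT (hxt.isPrimitiveChain hT)).sum_boundary_nonpos hT hk
      (hadj.isPrimitiveChain hT)
      (by simpa [derivChain_of_ne (Ne.symm hk)] using hx.ae_dotProduct_le hab))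
  simp [derivChain_of_ne (show k - 1 - j ≠ k by omega),
    derivChain_of_ne (show j ≠ k by simp at hj; omega)]

lemma le_of_subgradient_of_boundary_nonpos {ι : Type*} [Fintype ι]
    {f : (ι → ℝ) → (ι → ℝ) → ℝ} {a₀ a₁ y₀ y₁ p₀ p₁ μ₀ μ₁ q₀ q₁ : ι → ℝ} {σ : ℝ}
    (hsub : ∀ y₀ y₁, f a₀ a₁ + (p₀ ⬝ᵥ (y₀ - a₀) + p₁ ⬝ᵥ (y₁ - a₁)) ≤ f y₀ y₁)
    (hμ : 0 ≤ (y₀ - a₀) ⬝ᵥ μ₀ + (y₁ - a₁) ⬝ᵥ μ₁)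
    (hp₀ : σ • q₀ = p₀ - μ₀) (hp₁ : -σ • q₁ = p₁ - μ₁)
    (hq : σ * ((y₁ - a₁) ⬝ᵥ q₁ - (y₀ - a₀) ⬝ᵥ q₀) ≤ 0) :
    f a₀ a₁ ≤ f y₀ y₁ := by
  have h := hsub y₀ y₁
  rw [eq_sub_iff_add_eq] at hp₀ hp₁
  simp only [← hp₀, ← hp₁, add_dotProduct, smul_dotProduct, smul_eq_mul, dotProduct_comm μ₀,
    dotProduct_comm μ₁, dotProduct_comm q₀, dotProduct_comm q₁] at h
  linarith

theorem sufficient_optimality_kth_order_general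
    (n k : ℕ) (hk : 1 ≤ k) (T : ℝ) (hT : 0 < T)
    (F : (Fin n → ℝ) → ℝ → Set (Fin n → ℝ))
    (S : Set ((Fin n → ℝ) × (Fin n → ℝ)))
    (X : ℝ → Set (Fin n → ℝ))
    (f : (Fin n → ℝ) → (Fin n → ℝ) → ℝ)
    (xt vt : ℝ → (Fin n → ℝ))
    (hfeas : IsFeasible n k T F S X xt vt)
    (xs w : ℝ → (Fin n → ℝ))
    (hadj : IsAdjointArc n k T xs w)
    (vs : ℝ → (Fin n → ℝ))
    -- conditions (a)-(b)
    (hab : ∀ᵐ t ∂volume, t ∈ Icc (0:ℝ) T →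
      (∀ y ∈ X t, 0 ≤ (y - xt t) ⬝ᵥ vs t) ∧
      (∀ ξ η, η ∈ F ξ t →
        (η - vt t) ⬝ᵥ xs t ≤ (((-1:ℝ)^k • w t - vs t) ⬝ᵥ (ξ - xt t))))
    -- condition (c): transversality at the endpoints via a subgradient and a dual-cone element
    (hc : ∃ p₀ p₁ μ₀ μ₁ : Fin n → ℝ,
      (∀ y₀ y₁, f (xt 0) (xt T) + (p₀ ⬝ᵥ (y₀ - xt 0) + p₁ ⬝ᵥ (y₁ - xt T)) ≤ f y₀ y₁) ∧
      (∀ s ∈ S, 0 ≤ (s.1 - xt 0) ⬝ᵥ μ₀ + (s.2 - xt T) ⬝ᵥ μ₁) ∧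
      (-1:ℝ)^(k-1) • iteratedDeriv (k-1) xs 0 = p₀ - μ₀ ∧
      (-1:ℝ)^k • iteratedDeriv (k-1) xs T = p₁ - μ₁)
    -- condition (d)
    (hd : ∀ j < k - 1, ∀ s ∈ S,
      0 ≤ (s.1 - iteratedDeriv (k-j-1) xt 0) ⬝ᵥ ((-1:ℝ)^(j+1) • iteratedDeriv j xs 0)
        + (s.2 - iteratedDeriv (k-j-1) xt T) ⬝ᵥ ((-1:ℝ)^j • iteratedDeriv j xs T)) :
    ∀ x v, IsFeasible n k T F S X x v → f (xt 0) (xt T) ≤ f (x 0) (x T) := by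
  intro x v hx
  set B : ℕ → ℝ := fun j => (-1:ℝ) ^ j *
    ((iteratedDeriv (k - 1 - j) x T - iteratedDeriv (k - 1 - j) xt T) ⬝ᵥ iteratedDeriv j xs T
      - (iteratedDeriv (k - 1 - j) x 0 - iteratedDeriv (k - 1 - j) xt 0) ⬝ᵥ iteratedDeriv j xs 0)
  have hsum : ∑ j ∈ Finset.range k, B j ≤ 0 :=
    hx.sum_boundary_nonpos hT.le (by omega) hfeas hadj hab
  obtain ⟨-, -, -, -, hxS, -⟩ := hx
  have hlower : ∀ j ∈ Finset.range (k - 1), 0 ≤ B j := fun j hj => by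
    have hj' := Finset.mem_range.1 hj
    have := hd j hj' _ (hxS (k - j - 1) (by omega))
    simp only [Nat.sub_right_comm k j 1, dotProduct_smul, smul_eq_mul, pow_succ] at this
    simp only [B]
    linarith
  have htop : B (k - 1) ≤ 0 := by
    rw [← Nat.sub_add_cancel hk, Finset.sum_range_succ] at hsum
    linarith [Finset.sum_nonneg hlower]
  simp only [B, Nat.sub_self, iteratedDeriv_zero] at htop
  obtain ⟨p₀, p₁, μ₀, μ₁, hsub, hdual, hp₀, hp₁⟩ := hc
  have hσ : (-1:ℝ) ^ k = -(-1) ^ (k - 1) := by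
    rw [← neg_one_mul ((-1:ℝ) ^ (k - 1)), ← pow_succ', Nat.sub_add_cancel hk]
  rw [hσ] at hp₁
  exact le_of_subgradient_of_boundary_nonpos hsub
    (hdual (x 0, x T) (by simpa using hxS 0 (by omega))) hp₀ hp₁ htop

/-- Theorem 3.1: sufficient optimality condition for the `k`-th order differential
inclusion problem (PHC). -/
theorem sufficient_optimality_kth_order
    (n k : ℕ) (hn : 1 ≤ n) (hk : 1 ≤ k) (T : ℝ) (hT : 0 < T)
    (F : (Fin n → ℝ) → ℝ → Set (Fin n → ℝ))
    (S : Set ((Fin n → ℝ) × (Fin n → ℝ)))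
    (X : ℝ → Set (Fin n → ℝ))
    (f : (Fin n → ℝ) → (Fin n → ℝ) → ℝ)
    (hF : ∀ t ∈ Icc (0:ℝ) T, Convex ℝ {p : (Fin n → ℝ) × (Fin n → ℝ) | p.2 ∈ F p.1 t})
    (hf : ConvexOn ℝ univ (fun p : (Fin n → ℝ) × (Fin n → ℝ) => f p.1 p.2))
    (hS : Convex ℝ S)
    (hX : ∀ t ∈ Icc (0:ℝ) T, Convex ℝ (X t))
    (xt vt : ℝ → (Fin n → ℝ))
    (hfeas : IsFeasible n k T F S X xt vt)
    (xs w : ℝ → (Fin n → ℝ))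
    (hadj : IsAdjointArc n k T xs w)
    (vs : ℝ → (Fin n → ℝ))
    -- conditions (a)-(b)
    (hab : ∀ᵐ t ∂volume, t ∈ Icc (0:ℝ) T →
      (∀ y ∈ X t, 0 ≤ (y - xt t) ⬝ᵥ vs t) ∧
      (∀ ξ η, η ∈ F ξ t →
        (η - vt t) ⬝ᵥ xs t ≤ (((-1:ℝ)^k • w t - vs t) ⬝ᵥ (ξ - xt t))))
    -- condition (c): transversality at the endpoints via a subgradient and a dual-cone element
    (hc : ∃ p₀ p₁ μ₀ μ₁ : Fin n → ℝ,
      (∀ y₀ y₁, f (xt 0) (xt T) + (p₀ ⬝ᵥ (y₀ - xt 0) + p₁ ⬝ᵥ (y₁ - xt T)) ≤ f y₀ y₁) ∧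
      (∀ s ∈ S, 0 ≤ (s.1 - xt 0) ⬝ᵥ μ₀ + (s.2 - xt T) ⬝ᵥ μ₁) ∧
      (-1:ℝ)^(k-1) • iteratedDeriv (k-1) xs 0 = p₀ - μ₀ ∧
      (-1:ℝ)^k • iteratedDeriv (k-1) xs T = p₁ - μ₁)
    -- condition (d)
    (hd : ∀ j < k - 1, ∀ s ∈ S,
      0 ≤ (s.1 - iteratedDeriv (k-j-1) xt 0) ⬝ᵥ ((-1:ℝ)^(j+1) • iteratedDeriv j xs 0)
        + (s.2 - iteratedDeriv (k-j-1) xt T) ⬝ᵥ ((-1:ℝ)^j • iteratedDeriv j xs T)) :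
    ∀ x v, IsFeasible n k T F S X x v → f (xt 0) (xt T) ≤ f (x 0) (x T) :=
  sufficient_optimality_kth_order_general n k hk T hT F S X f xt vt hfeas xs w hadj vs hab hc hd
end

section
/- Sufficient optimality condition for a first-order differential inclusion (Remark 3.1, k = 1). Assume the graph {(x,v) : v ∈ F(x,t)} is convex for each t ∈ [0,T], f : ℝⁿ × ℝⁿ → ℝ is convex, S is convex, and X(t) is convex for every t ∈ [0,T]. Let x̃ : ℝ → ℝⁿ with integrable ṽ : [0,T] → ℝⁿ satisfy x̃(t) = x̃(0) + ∫₀ᵗ ṽ(s)ds on [0,T], ṽ(t) ∈ F(x̃(t),t) a.e., (x̃(0), x̃(T)) ∈ S and x̃(t) ∈ X(t) for all t. Let x* : ℝ → ℝⁿ with integrable w satisfy x*(t) = x*(0) + ∫₀ᵗ w(s)ds on [0,T], and let v* : [0,T] → ℝⁿ be such that for a.e. t ∈ [0,T]: ⟨y − x̃(t), v*(t)⟩ ≥ 0 for all y ∈ X(t), and ⟨v − ṽ(t), x*(t)⟩ ≤ ⟨−w(t) − v*(t), x − x̃(t)⟩ for every x ∈ ℝⁿ and every v ∈ F(x,t).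 Suppose also there exist p ∈ ∂f(x̃(0), x̃(T)) and μ* ∈ K_S*(x̃(0), x̃(T)) with (x*(0), −x*(T)) = p − μ*. Then for every x : ℝ → ℝⁿ with integrable v satisfying x(t) = x(0) + ∫₀ᵗ v(s)ds on [0,T], v(t) ∈ F(x(t),t) a.e., (x(0), x(T)) ∈ S and x(t) ∈ X(t) for all t ∈ [0,T], one has f(x(0), x(T)) ≥ f(x̃(0), x̃(T)). -/
open MeasureTheory Matrix Set

/-- Integration by parts for indefinite integrals of integrable real functions,
proved via Fubini. -/
lemma fubini_parts (T : ℝ) (a b : ℝ → ℝ)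
    (ha : IntegrableOn a (Ioc 0 T)) (hb : IntegrableOn b (Ioc 0 T)) :
    IntegrableOn (fun s => a s * ∫ u in Ioc (0:ℝ) s, b u) (Ioc 0 T) ∧
    IntegrableOn (fun s => (∫ u in Ioc (0:ℝ) s, a u) * b s) (Ioc 0 T) ∧
    (∫ s in Ioc (0:ℝ) T, ((a s * ∫ u in Ioc (0:ℝ) s, b u) + (∫ u in Ioc (0:ℝ) s, a u) * b s))
      = (∫ s in Ioc (0:ℝ) T, a s) * (∫ s in Ioc (0:ℝ) T, b s) := by
  set μ := volume.restrict (Ioc (0:ℝ) T) with hμ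
  have hprod : Integrable (fun p : ℝ × ℝ => a p.1 * b p.2) (μ.prod μ) := ha.mul_prod hb
  set g : ℝ × ℝ → ℝ := fun p => if p.2 ≤ p.1 then a p.1 * b p.2 else 0 with hgdef
  set g' : ℝ × ℝ → ℝ := fun p => if p.1 ≤ p.2 then a p.1 * b p.2 else 0 with hg'def
  have hsetg : MeasurableSet {p : ℝ × ℝ | p.2 ≤ p.1} :=
    measurableSet_le measurable_snd measurable_fst
  have hsetg' : MeasurableSet {p : ℝ × ℝ | p.1 ≤ p.2} :=
    measurableSet_le measurable_fst measurable_snd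
  have hgind : g = ({p : ℝ × ℝ | p.2 ≤ p.1}).indicator (fun p => a p.1 * b p.2) := by
    funext p; simp [hgdef, Set.indicator_apply]
  have hg'ind : g' = ({p : ℝ × ℝ | p.1 ≤ p.2}).indicator (fun p => a p.1 * b p.2) := by
    funext p; simp [hg'def, Set.indicator_apply]
  have hg : Integrable g (μ.prod μ) := by
    refine hprod.norm.mono' ?_ ?_
    · rw [hgind]; exact hprod.aestronglyMeasurable.indicator hsetg
    · refine Filter.Eventually.of_forall fun p => ?_
      by_cases h : p.2 ≤ p.1 <;> simp [hgdef, h] <;> positivity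
  have hg' : Integrable g' (μ.prod μ) := by
    refine hprod.norm.mono' ?_ ?_
    · rw [hg'ind]; exact hprod.aestronglyMeasurable.indicator hsetg'
    · refine Filter.Eventually.of_forall fun p => ?_
      by_cases h : p.1 ≤ p.2 <;> simp [hg'def, h] <;> positivity
  -- kernel computations
  have hker1 : ∀ s ∈ Ioc (0:ℝ) T, (∫ u, g (s, u) ∂μ) = a s * ∫ u in Ioc (0:ℝ) s, b u := by
    intro s hs
    have h1 : ∀ u, g (s, u) = a s * ((Iic s).indicator b u) := by
      intro u; by_cases h : u ≤ s <;> simp [hgdef, Set.indicator_apply, h]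
    have h2 : Ioc (0:ℝ) T ∩ Iic s = Ioc (0:ℝ) s := by
      rw [Set.Ioc_inter_Iic]; rw [min_eq_right hs.2]
    calc (∫ u, g (s, u) ∂μ) = ∫ u, a s * ((Iic s).indicator b u) ∂μ := by simp_rw [h1]
      _ = a s * ∫ u, (Iic s).indicator b u ∂μ := integral_const_mul _ _
      _ = a s * ∫ u in Iic s, b u ∂μ := by rw [integral_indicator measurableSet_Iic]
      _ = a s * ∫ u in Ioc (0:ℝ) s, b u := by
          rw [hμ, Measure.restrict_restrict measurableSet_Iic, Set.inter_comm, h2]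
  have hker2 : ∀ s ∈ Ioc (0:ℝ) T,
      (∫ u, g' (u, s) ∂μ) = (∫ u in Ioc (0:ℝ) s, a u) * b s := by
    intro s hs
    have h1 : ∀ u, g' (u, s) = ((Iic s).indicator a u) * b s := by
      intro u; by_cases h : u ≤ s <;> simp [hg'def, Set.indicator_apply, h]
    have h2 : Ioc (0:ℝ) T ∩ Iic s = Ioc (0:ℝ) s := by
      rw [Set.Ioc_inter_Iic]; rw [min_eq_right hs.2]
    calc (∫ u, g' (u, s) ∂μ) = ∫ u, ((Iic s).indicator a u) * b s ∂μ := by simp_rw [h1]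
      _ = (∫ u, (Iic s).indicator a u ∂μ) * b s := integral_mul_const _ _
      _ = (∫ u in Iic s, a u ∂μ) * b s := by rw [integral_indicator measurableSet_Iic]
      _ = (∫ u in Ioc (0:ℝ) s, a u) * b s := by
          rw [hμ, Measure.restrict_restrict measurableSet_Iic, Set.inter_comm, h2]
  have haemem : ∀ᵐ s ∂μ, s ∈ Ioc (0:ℝ) T := ae_restrict_mem measurableSet_Ioc
  have h1ae : (fun s => a s * ∫ u in Ioc (0:ℝ) s, b u) =ᵐ[μ] (fun s => ∫ u, g (s, u) ∂μ) := by
    filter_upwards [haemem] with s hs using (hker1 s hs).symm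
  have h2ae : (fun s => (∫ u in Ioc (0:ℝ) s, a u) * b s) =ᵐ[μ] (fun s => ∫ u, g' (u, s) ∂μ) := by
    filter_upwards [haemem] with s hs using (hker2 s hs).symm
  have int1 : Integrable (fun s => a s * ∫ u in Ioc (0:ℝ) s, b u) μ :=
    (hg.integral_prod_left).congr h1ae.symm
  have int2 : Integrable (fun s => (∫ u in Ioc (0:ℝ) s, a u) * b s) μ :=
    (hg'.integral_prod_right).congr h2ae.symm
  refine ⟨int1, int2, ?_⟩
  have e1 : (∫ s, (a s * ∫ u in Ioc (0:ℝ) s, b u) ∂μ) = ∫ p, g p ∂(μ.prod μ) := by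
    refine (integral_congr_ae h1ae).trans ?_
    have hgu : Integrable (Function.uncurry fun x y => g (x, y)) (μ.prod μ) := hg
    exact integral_integral hgu
  have e2 : (∫ s, ((∫ u in Ioc (0:ℝ) s, a u) * b s) ∂μ) = ∫ p, g' p ∂(μ.prod μ) := by
    refine (integral_congr_ae h2ae).trans ?_
    have hgu : Integrable (Function.uncurry fun x y => g' (y, x)) (μ.prod μ) := hg'.swap
    exact integral_integral_symm hgu
  -- the diagonal is null
  have hdiagset : MeasurableSet {p : ℝ × ℝ | p.1 = p.2} :=
    measurableSet_eq_fun measurable_fst measurable_snd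
  have hdiag : (μ.prod μ) {p : ℝ × ℝ | p.1 = p.2} = 0 := by
    rw [Measure.prod_apply hdiagset]
    have : ∀ x : ℝ, μ (Prod.mk x ⁻¹' {p : ℝ × ℝ | p.1 = p.2}) = 0 := by
      intro x
      have : Prod.mk x ⁻¹' {p : ℝ × ℝ | p.1 = p.2} = {x} := by
        ext y; simp [eq_comm]
      rw [this]
      exact le_antisymm ((Measure.restrict_le_self _).trans_eq (Real.volume_singleton)) bot_le
    simp [this]
  have hdiagae : ∀ᵐ p ∂(μ.prod μ), p ∉ {p : ℝ × ℝ | p.1 = p.2} :=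
    measure_eq_zero_iff_ae_notMem.mp hdiag
  have hsum : (∫ p, g p ∂(μ.prod μ)) + (∫ p, g' p ∂(μ.prod μ))
      = (∫ s, a s ∂μ) * (∫ s, b s ∂μ) := by
    rw [← integral_add hg hg']
    have : (fun p => g p + g' p) =ᵐ[μ.prod μ] (fun p : ℝ × ℝ => a p.1 * b p.2) := by
      filter_upwards [hdiagae] with p hp
      have hne : p.1 ≠ p.2 := hp
      rcases lt_or_gt_of_ne hne with h | h
      · simp [hgdef, hg'def, not_le.mpr h, h.le]
      · simp [hgdef, hg'def, not_le.mpr h, h.le]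
    rw [integral_congr_ae this, integral_prod_mul]
  refine (integral_add int1 int2).trans ?_
  beta_reduce
  rw [e1, e2]
  exact hsum

/-- The continuous linear map `x ↦ x ⬝ᵥ c`. -/
noncomputable def dotCLM {n : ℕ} (c : Fin n → ℝ) : (Fin n → ℝ) →L[ℝ] ℝ :=
  LinearMap.toContinuousLinearMap
    { toFun := fun x => x ⬝ᵥ c
      map_add' := fun x y => add_dotProduct x y c
      map_smul' := fun r x => by simp [smul_dotProduct, smul_eq_mul] }

@[simp] lemma dotCLM_apply {n : ℕ} (c : Fin n → ℝ) (x : Fin n → ℝ) :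
    dotCLM c x = x ⬝ᵥ c := rfl

lemma integrable_dot {n : ℕ} {μ : Measure ℝ} {u : ℝ → Fin n → ℝ}
    (hu : Integrable u μ) (c : Fin n → ℝ) :
    Integrable (fun t => u t ⬝ᵥ c) μ :=
  (dotCLM c).integrable_comp hu

lemma integral_dot {n : ℕ} {μ : Measure ℝ} {u : ℝ → Fin n → ℝ}
    (hu : Integrable u μ) (c : Fin n → ℝ) :
    (∫ t, u t ⬝ᵥ c ∂μ) = (∫ t, u t ∂μ) ⬝ᵥ c := by
  have := ContinuousLinearMap.integral_comp_comm (dotCLM c) hu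
  simpa using this

lemma integrable_comp_proj {n : ℕ} {μ : Measure ℝ} {u : ℝ → Fin n → ℝ}
    (hu : Integrable u μ) (i : Fin n) :
    Integrable (fun t => u t i) μ :=
  (ContinuousLinearMap.proj (R := ℝ) (φ := fun _ : Fin n => ℝ) i).integrable_comp hu

lemma integral_comp_proj {n : ℕ} {μ : Measure ℝ} {u : ℝ → Fin n → ℝ}
    (hu : Integrable u μ) (i : Fin n) :
    (∫ t, u t i ∂μ) = (∫ t, u t ∂μ) i := by
  have := ContinuousLinearMap.integral_comp_comm
    (ContinuousLinearMap.proj (R := ℝ) (φ := fun _ : Fin n => ℝ) i) hu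
  simpa using this

/-- Vector-valued version of `fubini_parts` using the dot product. -/
lemma fubini_parts_vec (n : ℕ) (T : ℝ) (a b : ℝ → (Fin n → ℝ))
    (ha : IntegrableOn a (Ioc 0 T)) (hb : IntegrableOn b (Ioc 0 T)) :
    IntegrableOn (fun s => a s ⬝ᵥ (∫ u in Ioc (0:ℝ) s, b u)
        + (∫ u in Ioc (0:ℝ) s, a u) ⬝ᵥ b s) (Ioc 0 T) ∧
    (∫ s in Ioc (0:ℝ) T, (a s ⬝ᵥ (∫ u in Ioc (0:ℝ) s, b u)
        + (∫ u in Ioc (0:ℝ) s, a u) ⬝ᵥ b s))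
      = (∫ s in Ioc (0:ℝ) T, a s) ⬝ᵥ (∫ s in Ioc (0:ℝ) T, b s) := by
  set μ := volume.restrict (Ioc (0:ℝ) T) with hμ
  have hai : ∀ i, IntegrableOn (fun s => a s i) (Ioc 0 T) :=
    fun i => integrable_comp_proj ha i
  have hbi : ∀ i, IntegrableOn (fun s => b s i) (Ioc 0 T) :=
    fun i => integrable_comp_proj hb i
  have key := fun i => fubini_parts T (fun s => a s i) (fun s => b s i) (hai i) (hbi i)
  have keyint : ∀ i : Fin n, IntegrableOn (fun s => a s i * (∫ u in Ioc (0:ℝ) s, b u i)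
      + (∫ u in Ioc (0:ℝ) s, a u i) * b s i) (Ioc 0 T) :=
    fun i => (key i).1.add (key i).2.1
  have h1 : ∀ i ∈ Finset.univ, (∫ s in Ioc (0:ℝ) T,
      (a s i * (∫ u in Ioc (0:ℝ) s, b u i) + (∫ u in Ioc (0:ℝ) s, a u i) * b s i))
      = (∫ s in Ioc (0:ℝ) T, a s i) * (∫ s in Ioc (0:ℝ) T, b s i) :=
    fun i _ => (key i).2.2
  -- pointwise identity on Ioc 0 T
  have hpt : ∀ s ∈ Ioc (0:ℝ) T,
      a s ⬝ᵥ (∫ u in Ioc (0:ℝ) s, b u) + (∫ u in Ioc (0:ℝ) s, a u) ⬝ᵥ b s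
        = ∑ i, (a s i * (∫ u in Ioc (0:ℝ) s, b u i)
            + (∫ u in Ioc (0:ℝ) s, a u i) * b s i) := by
    intro s hs
    have hsub : Ioc (0:ℝ) s ⊆ Ioc (0:ℝ) T := Set.Ioc_subset_Ioc_right hs.2
    have hbcomp : ∀ i, (∫ u in Ioc (0:ℝ) s, b u i) = (∫ u in Ioc (0:ℝ) s, b u) i :=
      fun i => integral_comp_proj (hb.mono_set hsub) i
    have hacomp : ∀ i, (∫ u in Ioc (0:ℝ) s, a u i) = (∫ u in Ioc (0:ℝ) s, a u) i :=
      fun i => integral_comp_proj (ha.mono_set hsub) i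
    simp only [hbcomp, hacomp, dotProduct, Finset.sum_add_distrib]
  have haemem : ∀ᵐ s ∂(volume.restrict (Ioc (0:ℝ) T)), s ∈ Ioc (0:ℝ) T :=
    ae_restrict_mem measurableSet_Ioc
  have hptae : (fun s => a s ⬝ᵥ (∫ u in Ioc (0:ℝ) s, b u) + (∫ u in Ioc (0:ℝ) s, a u) ⬝ᵥ b s)
      =ᵐ[volume.restrict (Ioc (0:ℝ) T)]
      (fun s => ∑ i, (a s i * (∫ u in Ioc (0:ℝ) s, b u i)
          + (∫ u in Ioc (0:ℝ) s, a u i) * b s i)) := by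
    filter_upwards [haemem] with s hs using hpt s hs
  have intsum : IntegrableOn (fun s => ∑ i, (a s i * (∫ u in Ioc (0:ℝ) s, b u i)
      + (∫ u in Ioc (0:ℝ) s, a u i) * b s i)) (Ioc 0 T) :=
    integrable_finset_sum _ fun i _ => keyint i
  constructor
  · exact intsum.congr hptae.symm
  · refine (integral_congr_ae hptae).trans ?_
    refine (integral_finset_sum Finset.univ (fun i _ => keyint i)).trans ?_
    refine (Finset.sum_congr rfl h1).trans ?_
    simp only [dotProduct]
    refine Finset.sum_congr rfl fun i _ => ?_
    rw [integral_comp_proj ha i, integral_comp_proj hb i]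

/-- Remark 3.1 (k = 1): sufficient optimality condition for a first-order
differential inclusion with endpoint and state constraints. -/
theorem sufficient_optimality_first_order
    (n : ℕ) (hn : 1 ≤ n) (T : ℝ) (hT : 0 < T)
    (F : (Fin n → ℝ) → ℝ → Set (Fin n → ℝ))
    (S : Set ((Fin n → ℝ) × (Fin n → ℝ)))
    (X : ℝ → Set (Fin n → ℝ))
    (f : (Fin n → ℝ) → (Fin n → ℝ) → ℝ)
    (hF : ∀ t ∈ Icc (0:ℝ) T, Convex ℝ {p : (Fin n → ℝ) × (Fin n → ℝ) | p.2 ∈ F p.1 t})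
    (hf : ConvexOn ℝ univ (fun p : (Fin n → ℝ) × (Fin n → ℝ) => f p.1 p.2))
    (hS : Convex ℝ S)
    (hX : ∀ t ∈ Icc (0:ℝ) T, Convex ℝ (X t))
    -- the reference trajectory x̃ with "derivative" ṽ
    (xt vt : ℝ → (Fin n → ℝ))
    (hvt : IntervalIntegrable vt volume 0 T)
    (hxt : ∀ t ∈ Icc (0:ℝ) T, xt t = xt 0 + ∫ s in (0:ℝ)..t, vt s)
    (hincl : ∀ᵐ t ∂volume, t ∈ Icc (0:ℝ) T → vt t ∈ F (xt t) t)
    (hend : (xt 0, xt T) ∈ S)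
    (hstate : ∀ t ∈ Icc (0:ℝ) T, xt t ∈ X t)
    -- the adjoint arc x* with "derivative" w
    (xs w : ℝ → (Fin n → ℝ))
    (hw : IntervalIntegrable w volume 0 T)
    (hxs : ∀ t ∈ Icc (0:ℝ) T, xs t = xs 0 + ∫ s in (0:ℝ)..t, w s)
    (vs : ℝ → (Fin n → ℝ))
    -- conditions (1)-(2): Euler-Lagrange type inclusion
    (hab : ∀ᵐ t ∂volume, t ∈ Icc (0:ℝ) T →
      (∀ y ∈ X t, 0 ≤ (y - xt t) ⬝ᵥ vs t) ∧
      (∀ ξ η, η ∈ F ξ t →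
        (η - vt t) ⬝ᵥ xs t ≤ ((-w t - vs t) ⬝ᵥ (ξ - xt t))))
    -- condition (3): transversality
    (hc : ∃ p₀ p₁ μ₀ μ₁ : Fin n → ℝ,
      (∀ y₀ y₁, f (xt 0) (xt T) + (p₀ ⬝ᵥ (y₀ - xt 0) + p₁ ⬝ᵥ (y₁ - xt T)) ≤ f y₀ y₁) ∧
      (∀ s ∈ S, 0 ≤ (s.1 - xt 0) ⬝ᵥ μ₀ + (s.2 - xt T) ⬝ᵥ μ₁) ∧
      xs 0 = p₀ - μ₀ ∧ -(xs T) = p₁ - μ₁) :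
    ∀ x v : ℝ → (Fin n → ℝ),
      IntervalIntegrable v volume 0 T →
      (∀ t ∈ Icc (0:ℝ) T, x t = x 0 + ∫ s in (0:ℝ)..t, v s) →
      (∀ᵐ t ∂volume, t ∈ Icc (0:ℝ) T → v t ∈ F (x t) t) →
      (x 0, x T) ∈ S →
      (∀ t ∈ Icc (0:ℝ) T, x t ∈ X t) →
      f (xt 0) (xt T) ≤ f (x 0) (x T) := by
  intro x v hv hx hxF hxS hxX
  obtain ⟨p₀, p₁, μ₀, μ₁, hp, hμ, h0, hT'⟩ := hc
  -- the defect functions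
  set a : ℝ → Fin n → ℝ := fun s => v s - vt s with hadef
  have ha : IntegrableOn a (Ioc 0 T) := (hv.sub hvt).1
  have hbw : IntegrableOn w (Ioc 0 T) := hw.1
  -- interval integrals as set integrals, on Icc points
  have hseg : ∀ t ∈ Icc (0:ℝ) T, ∀ (u : ℝ → Fin n → ℝ),
      (∫ s in (0:ℝ)..t, u s) = ∫ s in Ioc (0:ℝ) t, u s := by
    intro t ht u
    exact intervalIntegral.integral_of_le ht.1
  have hTmem : T ∈ Icc (0:ℝ) T := ⟨hT.le, le_rfl⟩
  -- the difference trajectory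
  have hdiff : ∀ t ∈ Icc (0:ℝ) T,
      x t - xt t = (x 0 - xt 0) + ∫ s in Ioc (0:ℝ) t, a s := by
    intro t ht
    have hsub : Ioc (0:ℝ) t ⊆ Ioc (0:ℝ) T := Set.Ioc_subset_Ioc_right ht.2
    have : (∫ s in Ioc (0:ℝ) t, a s)
        = (∫ s in Ioc (0:ℝ) t, v s) - (∫ s in Ioc (0:ℝ) t, vt s) := by
      rw [hadef]
      exact integral_sub (hv.1.mono_set hsub) (hvt.1.mono_set hsub)
    rw [this, hx t ht, hxt t ht, hseg t ht v, hseg t ht vt]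
    abel
  have hxsint : ∀ t ∈ Icc (0:ℝ) T, xs t = xs 0 + ∫ s in Ioc (0:ℝ) t, w s := by
    intro t ht
    rw [hxs t ht, hseg t ht w]
  -- key integration by parts
  obtain ⟨hintparts, heqparts⟩ := fubini_parts_vec n T a w ha hbw
  -- identify the integrand
  set h : ℝ → ℝ := fun s => (v s - vt s) ⬝ᵥ xs s + (x s - xt s) ⬝ᵥ w s with hhdef
  set h' : ℝ → ℝ := fun s => a s ⬝ᵥ xs 0 + w s ⬝ᵥ (x 0 - xt 0)
      + (a s ⬝ᵥ (∫ u in Ioc (0:ℝ) s, w u) + (∫ u in Ioc (0:ℝ) s, a u) ⬝ᵥ w s) with hh'def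
  have hhh' : ∀ s ∈ Ioc (0:ℝ) T, h s = h' s := by
    intro s hs
    have hsIcc : s ∈ Icc (0:ℝ) T := Set.Ioc_subset_Icc_self hs
    rw [hhdef, hh'def]
    simp only
    rw [hxsint s hsIcc, hdiff s hsIcc]
    rw [show (v s - vt s) = a s from rfl]
    rw [dotProduct_add, add_dotProduct, dotProduct_comm (w s) (x 0 - xt 0)]
    ring
  have hinth' : IntegrableOn h' (Ioc 0 T) := by
    refine (Integrable.add (Integrable.add ?_ ?_) hintparts)
    · exact integrable_dot ha (xs 0)
    · exact integrable_dot hbw (x 0 - xt 0)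
  have hinth : IntegrableOn h (Ioc 0 T) := by
    refine hinth'.congr ?_
    filter_upwards [ae_restrict_mem measurableSet_Ioc] with s hs using (hhh' s hs).symm
  -- the value of the integral
  have i1 : IntegrableOn (fun s => a s ⬝ᵥ xs 0) (Ioc 0 T) := integrable_dot ha (xs 0)
  have i2 : IntegrableOn (fun s => w s ⬝ᵥ (x 0 - xt 0)) (Ioc 0 T) :=
    integrable_dot hbw (x 0 - xt 0)
  have i12 : IntegrableOn (fun s => a s ⬝ᵥ xs 0 + w s ⬝ᵥ (x 0 - xt 0)) (Ioc 0 T) := i1.add i2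
  have hint_eq : (∫ s in Ioc (0:ℝ) T, h s)
      = (x T - xt T) ⬝ᵥ xs T - (x 0 - xt 0) ⬝ᵥ xs 0 := by
    have e0 : (∫ s in Ioc (0:ℝ) T, h s) = ∫ s in Ioc (0:ℝ) T, h' s := by
      refine integral_congr_ae ?_
      filter_upwards [ae_restrict_mem measurableSet_Ioc] with s hs using hhh' s hs
    have E1 : (∫ s in Ioc (0:ℝ) T, h' s)
        = (∫ s in Ioc (0:ℝ) T, (a s ⬝ᵥ xs 0 + w s ⬝ᵥ (x 0 - xt 0)))
          + ∫ s in Ioc (0:ℝ) T, (a s ⬝ᵥ (∫ u in Ioc (0:ℝ) s, w u)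
              + (∫ u in Ioc (0:ℝ) s, a u) ⬝ᵥ w s) := integral_add i12 hintparts
    have E2 : (∫ s in Ioc (0:ℝ) T, (a s ⬝ᵥ xs 0 + w s ⬝ᵥ (x 0 - xt 0)))
        = (∫ s in Ioc (0:ℝ) T, a s) ⬝ᵥ xs 0 + (∫ s in Ioc (0:ℝ) T, w s) ⬝ᵥ (x 0 - xt 0) := by
      refine (integral_add i1 i2).trans ?_
      beta_reduce
      rw [integral_dot ha (xs 0), integral_dot hbw (x 0 - xt 0)]
    rw [e0, E1, E2, heqparts]
    rw [hdiff T hTmem, hxsint T hTmem]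
    rw [dotProduct_add, add_dotProduct, add_dotProduct,
      dotProduct_comm (∫ s in Ioc (0:ℝ) T, w s) (x 0 - xt 0)]
    ring
  -- the integrand is a.e. nonpositive
  have hae : ∀ᵐ s ∂(volume.restrict (Ioc (0:ℝ) T)), h s ≤ 0 := by
    filter_upwards [ae_restrict_of_ae hab, ae_restrict_of_ae hxF,
      ae_restrict_mem measurableSet_Ioc] with s h₁ h₂ hs
    have hsIcc : s ∈ Icc (0:ℝ) T := Set.Ioc_subset_Icc_self hs
    obtain ⟨hA, hB⟩ := h₁ hsIcc
    have e1 := hB (x s) (v s) (h₂ hsIcc)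
    have e2 := hA (x s) (hxX s hsIcc)
    have e3 : (-w s - vs s) ⬝ᵥ (x s - xt s)
        = -((x s - xt s) ⬝ᵥ w s) - (x s - xt s) ⬝ᵥ vs s := by
      rw [sub_dotProduct, neg_dotProduct,
        dotProduct_comm (w s) (x s - xt s), dotProduct_comm (vs s) (x s - xt s)]
    rw [e3] at e1
    rw [hhdef]
    simp only
    linarith
  have hD : (x T - xt T) ⬝ᵥ xs T - (x 0 - xt 0) ⬝ᵥ xs 0 ≤ 0 := by
    rw [← hint_eq]
    exact integral_nonpos_of_ae hae
  -- transversality arithmetic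
  have hfin := hp (x 0) (x T)
  have hμval := hμ (x 0, x T) hxS
  simp only at hμval
  have hp₀ : p₀ = xs 0 + μ₀ := by
    rw [h0]; abel
  have hp₁ : p₁ = μ₁ - xs T := by
    have := hT'
    rw [eq_sub_iff_add_eq] at this
    rw [← this]; abel
  have expand : p₀ ⬝ᵥ (x 0 - xt 0) + p₁ ⬝ᵥ (x T - xt T)
      = ((x 0 - xt 0) ⬝ᵥ μ₀ + (x T - xt T) ⬝ᵥ μ₁)
        - ((x T - xt T) ⬝ᵥ xs T - (x 0 - xt 0) ⬝ᵥ xs 0) := by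
    rw [hp₀, hp₁, add_dotProduct, sub_dotProduct,
      dotProduct_comm μ₀ (x 0 - xt 0), dotProduct_comm μ₁ (x T - xt T),
      dotProduct_comm (xs 0) (x 0 - xt 0), dotProduct_comm (xs T) (x T - xt T)]
    ring
  rw [expand] at hfin
  linarith
end

section
/- Strong duality: attainment of the dual value at an optimal pair (the substantive direction of Theorem 4.1). Assume the hypotheses and conditions (a)–(d) of Theorem 3.1 hold for a feasible solution (x̃, ṽ) of order k, an adjoint arc (x*, w) of order k, a function v* : [0,T] → ℝⁿ, a subgradient p ∈ ∂f(x̃(0), x̃(T)) and μ* = (μ₀*, μ₁*) ∈ K_S*(x̃(0), x̃(T)); assume in addition that v* is measurable and t ↦ ⟨x̃(t), v*(t)⟩ is integrable on [0,T]. Define m(t) := ⟨x̃(t), (−1)^k w(t) − v*(t)⟩ − ⟨ṽ(t), x*(t)⟩, ω(t) := −⟨x̃(t), v*(t)⟩, c_f := ⟨x̃(0), (−1)^{k−1} x*^{(k−1)}(0) + μ₀*⟩ + ⟨x̃(T), μ₁* + (−1)^k x*^{(k−1)}(T)⟩ − f(x̃(0), x̃(T)), c_S := −⟨x̃(0), μ₀*⟩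 − ⟨x̃(T), μ₁*⟩, and c_S^j := ⟨x̃^{(k−1−j)}(0), (−1)^j x*^{(j)}(0)⟩ + ⟨x̃^{(k−1−j)}(T), (−1)^{j+1} x*^{(j)}(T)⟩ for j = 0,…,k−2. Then: (1) these choices satisfy all the majorization conditions (i)–(v) of the weak duality inequality (so they are feasible for the dual problem (PHC*)); and (2) −c_f + ∫₀ᵀ m(t)dt − ∫₀ᵀ ω(t)dt − c_S − Σ_{j=0}^{k−2} c_S^j = f(x̃(0), x̃(T)); hence the optimal values of (PHC) and (PHC*) coincide. -/
open MeasureTheory Matrix Set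

section StrongDualityHelpers
open intervalIntegral


lemma ibp_scalar (T : ℝ) (hT : 0 ≤ T) (a b : ℝ → ℝ)
    (ha : IntervalIntegrable a volume 0 T) (hb : IntervalIntegrable b volume 0 T) :
    ∫ t in (0:ℝ)..T, (a t * (∫ s in (0:ℝ)..t, b s) + (∫ s in (0:ℝ)..t, a s) * b t)
      = (∫ s in (0:ℝ)..T, a s) * (∫ s in (0:ℝ)..T, b s) := by
  set α : ℝ → ℝ := fun t => ∫ s in (0:ℝ)..t, a s with hα
  set β : ℝ → ℝ := fun t => ∫ s in (0:ℝ)..t, b s with hβ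
  set μ : Measure ℝ := volume.restrict (Ioc (0:ℝ) T) with hμ
  have Ia : Integrable a μ := (intervalIntegrable_iff_integrableOn_Ioc_of_le hT).1 ha
  have Ib : Integrable b μ := (intervalIntegrable_iff_integrableOn_Ioc_of_le hT).1 hb
  have haIcc : IntegrableOn a (uIcc (0:ℝ) T) := by
    rw [uIcc_of_le hT, integrableOn_Icc_iff_integrableOn_Ioc]; exact Ia
  have hbIcc : IntegrableOn b (uIcc (0:ℝ) T) := by
    rw [uIcc_of_le hT, integrableOn_Icc_iff_integrableOn_Ioc]; exact Ib
  have hαc : ContinuousOn α (uIcc (0:ℝ) T) := continuousOn_primitive_interval haIcc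
  have hβc : ContinuousOn β (uIcc (0:ℝ) T) := continuousOn_primitive_interval hbIcc
  have hIaβ : IntervalIntegrable (fun t => a t * β t) volume 0 T := ha.mul_continuousOn hβc
  have hIαb : IntervalIntegrable (fun t => α t * b t) volume 0 T := hb.continuousOn_mul hαc
  set K : ℝ → ℝ → ℝ := fun t s => if s ≤ t then a t * b s else 0 with hK
  have hKint : Integrable (Function.uncurry K) (μ.prod μ) := by
    have : Function.uncurry K
        = {p : ℝ × ℝ | p.2 ≤ p.1}.indicator (fun p => a p.1 * b p.2) := by
      funext p
      simp only [Function.uncurry, hK, indicator_apply, mem_setOf_eq]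
    rw [this]
    exact (Ia.mul_prod Ib).indicator (measurableSet_le measurable_snd measurable_fst)
  have claim1 : ∫ t in (0:ℝ)..T, a t * β t = ∫ t, ∫ s, K t s ∂μ ∂μ := by
    rw [integral_of_le hT]
    apply setIntegral_congr_fun measurableSet_Ioc
    intro t ht
    symm
    have h1 : ∀ s, K t s = (Iic t).indicator (fun s => a t * b s) s := by
      intro s; simp only [hK, indicator_apply, mem_Iic]
    simp only [h1]
    rw [MeasureTheory.integral_indicator measurableSet_Iic, hμ, Measure.restrict_restrict measurableSet_Iic]
    have h2 : Iic t ∩ Ioc 0 T = Ioc 0 t := by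
      ext s; simp only [mem_inter_iff, mem_Iic, mem_Ioc]
      exact ⟨fun h => ⟨h.2.1, h.1⟩, fun h => ⟨h.2, h.1, h.2.trans ht.2⟩⟩
    rw [h2, MeasureTheory.integral_const_mul]
    have hh : β t = ∫ s in Ioc (0:ℝ) t, b s := by rw [hβ]; exact integral_of_le ht.1.le
    rw [hh]
  have claim2 : ∫ s, ∫ t, K t s ∂μ ∂μ = ∫ s in (0:ℝ)..T, (α T - α s) * b s := by
    rw [integral_of_le hT]
    apply setIntegral_congr_fun measurableSet_Ioc
    intro s hs
    symm
    have h1 : ∀ t, K t s = (Ici s).indicator (fun t => a t * b s) t := by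
      intro t; simp only [hK, indicator_apply, mem_Ici]
    simp only [h1]
    rw [MeasureTheory.integral_indicator measurableSet_Ici, hμ, Measure.restrict_restrict measurableSet_Ici]
    have h2 : Ici s ∩ Ioc 0 T = Icc s T := by
      ext t; simp only [mem_inter_iff, mem_Ici, mem_Ioc, mem_Icc]
      exact ⟨fun h => ⟨h.1, h.2.2⟩, fun h => ⟨h.1, hs.1.trans_le h.1, h.2⟩⟩
    rw [h2, MeasureTheory.integral_mul_const, integral_Icc_eq_integral_Ioc,
      ← integral_of_le hs.2]
    have has : IntervalIntegrable a volume 0 s := by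
      apply ha.mono_set
      rw [uIcc_of_le hs.1.le, uIcc_of_le hT]
      exact Icc_subset_Icc le_rfl hs.2
    rw [← integral_interval_sub_left ha has]
  have swap : ∫ t, ∫ s, K t s ∂μ ∂μ = ∫ s, ∫ t, K t s ∂μ ∂μ :=
    MeasureTheory.integral_integral_swap hKint
  have step : ∫ t in (0:ℝ)..T, a t * β t
      = α T * (∫ s in (0:ℝ)..T, b s) - ∫ s in (0:ℝ)..T, α s * b s := by
    rw [claim1, swap, claim2]
    have : ∀ s, (α T - α s) * b s = α T * b s - α s * b s := fun s => by ring
    simp only [this]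
    rw [intervalIntegral.integral_sub (hb.const_mul (α T)) hIαb,
      intervalIntegral.integral_const_mul]
  rw [intervalIntegral.integral_add hIaβ hIαb, step]
  ring

lemma ibp_scalar' (T : ℝ) (hT : 0 ≤ T) (a b : ℝ → ℝ) (A B : ℝ)
    (ha : IntervalIntegrable a volume 0 T) (hb : IntervalIntegrable b volume 0 T) :
    ∫ t in (0:ℝ)..T, (a t * (B + ∫ s in (0:ℝ)..t, b s) + (A + ∫ s in (0:ℝ)..t, a s) * b t)
      = (A + ∫ s in (0:ℝ)..T, a s) * (B + ∫ s in (0:ℝ)..T, b s) - A * B := by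
  have haIcc : IntegrableOn a (uIcc (0:ℝ) T) := by
    rw [uIcc_of_le hT, integrableOn_Icc_iff_integrableOn_Ioc]
    exact (intervalIntegrable_iff_integrableOn_Ioc_of_le hT).1 ha
  have hbIcc : IntegrableOn b (uIcc (0:ℝ) T) := by
    rw [uIcc_of_le hT, integrableOn_Icc_iff_integrableOn_Ioc]
    exact (intervalIntegrable_iff_integrableOn_Ioc_of_le hT).1 hb
  have hαc : ContinuousOn (fun t => ∫ s in (0:ℝ)..t, a s) (uIcc (0:ℝ) T) :=
    continuousOn_primitive_interval haIcc
  have hβc : ContinuousOn (fun t => ∫ s in (0:ℝ)..t, b s) (uIcc (0:ℝ) T) :=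
    continuousOn_primitive_interval hbIcc
  have hIaβ : IntervalIntegrable (fun t => a t * ∫ s in (0:ℝ)..t, b s) volume 0 T :=
    ha.mul_continuousOn hβc
  have hIαb : IntervalIntegrable (fun t => (∫ s in (0:ℝ)..t, a s) * b t) volume 0 T :=
    hb.continuousOn_mul hαc
  have key := ibp_scalar T hT a b ha hb
  have expand : ∀ t : ℝ,
      a t * (B + ∫ s in (0:ℝ)..t, b s) + (A + ∫ s in (0:ℝ)..t, a s) * b t
      = (A * b t + B * a t)
        + (a t * (∫ s in (0:ℝ)..t, b s) + (∫ s in (0:ℝ)..t, a s) * b t) := fun t => by ring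
  simp only [expand]
  rw [intervalIntegral.integral_add ((hb.const_mul A).add (ha.const_mul B))
    (hIaβ.add hIαb),
    intervalIntegral.integral_add (hb.const_mul A) (ha.const_mul B),
    intervalIntegral.integral_const_mul, intervalIntegral.integral_const_mul, key]
  ring

lemma intervalIntegrable_apply {n : ℕ} {f : ℝ → Fin n → ℝ} {T : ℝ}
    (h : IntervalIntegrable f volume 0 T) (i : Fin n) :
    IntervalIntegrable (fun t => f t i) volume 0 T :=
  ⟨(ContinuousLinearMap.proj (R := ℝ) (φ := fun _ : Fin n => ℝ) i).integrable_comp h.1,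
   (ContinuousLinearMap.proj (R := ℝ) (φ := fun _ : Fin n => ℝ) i).integrable_comp h.2⟩

lemma intervalIntegral_apply {n : ℕ} {f : ℝ → Fin n → ℝ} {c d : ℝ}
    (h : IntervalIntegrable f volume c d) (i : Fin n) :
    (∫ t in c..d, f t) i = ∫ t in c..d, f t i :=
  ((ContinuousLinearMap.proj (R := ℝ) (φ := fun _ : Fin n => ℝ) i).intervalIntegral_comp_comm h).symm

lemma ibp_vec {n : ℕ} (T : ℝ) (hT : 0 ≤ T) (u v a b : ℝ → Fin n → ℝ)
    (ha : IntervalIntegrable a volume 0 T) (hb : IntervalIntegrable b volume 0 T)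
    (hu : ∀ t ∈ Icc (0:ℝ) T, u t = u 0 + ∫ s in (0:ℝ)..t, a s)
    (hv : ∀ t ∈ Icc (0:ℝ) T, v t = v 0 + ∫ s in (0:ℝ)..t, b s) :
    ∫ t in (0:ℝ)..T, (a t ⬝ᵥ v t + u t ⬝ᵥ b t)
      = u T ⬝ᵥ v T - u 0 ⬝ᵥ v 0 := by
  have hai : ∀ i, IntervalIntegrable (fun t => a t i) volume 0 T :=
    fun i => intervalIntegrable_apply ha i
  have hbi : ∀ i, IntervalIntegrable (fun t => b t i) volume 0 T :=
    fun i => intervalIntegrable_apply hb i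
  have hsub : ∀ t : ℝ, t ∈ Icc (0:ℝ) T → IntervalIntegrable a volume 0 t ∧
      IntervalIntegrable b volume 0 t := by
    intro t ht
    have hs : uIcc (0:ℝ) t ⊆ uIcc (0:ℝ) T := by
      rw [uIcc_of_le ht.1, uIcc_of_le hT]; exact Icc_subset_Icc le_rfl ht.2
    exact ⟨ha.mono_set hs, hb.mono_set hs⟩
  have congr1 : EqOn (fun t => a t ⬝ᵥ v t + u t ⬝ᵥ b t)
      (fun t => ∑ i : Fin n,
        ((fun s => a s i) t * (v 0 i + ∫ s in (0:ℝ)..t, b s i)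
          + (u 0 i + ∫ s in (0:ℝ)..t, a s i) * (fun s => b s i) t))
      (uIcc (0:ℝ) T) := by
    intro t ht
    rw [uIcc_of_le hT] at ht
    have h1 := hsub t ht
    simp only
    rw [hu t ht, hv t ht]
    unfold dotProduct
    rw [← Finset.sum_add_distrib]
    apply Finset.sum_congr rfl
    intro i _
    have e1 : (u 0 + ∫ s in (0:ℝ)..t, a s) i = u 0 i + ∫ s in (0:ℝ)..t, a s i := by
      rw [Pi.add_apply, intervalIntegral_apply h1.1 i]
    have e2 : (v 0 + ∫ s in (0:ℝ)..t, b s) i = v 0 i + ∫ s in (0:ℝ)..t, b s i := by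
      rw [Pi.add_apply, intervalIntegral_apply h1.2 i]
    rw [e1, e2]
  rw [intervalIntegral.integral_congr congr1]
  have hint : ∀ i : Fin n, IntervalIntegrable (fun t =>
      (fun s => a s i) t * (v 0 i + ∫ s in (0:ℝ)..t, b s i)
        + (u 0 i + ∫ s in (0:ℝ)..t, a s i) * (fun s => b s i) t) volume 0 T := by
    intro i
    have hIb : IntegrableOn (fun t => b t i) (uIcc (0:ℝ) T) := by
      rw [uIcc_of_le hT, integrableOn_Icc_iff_integrableOn_Ioc]
      exact (intervalIntegrable_iff_integrableOn_Ioc_of_le hT).1 (hbi i)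
    have hIa : IntegrableOn (fun t => a t i) (uIcc (0:ℝ) T) := by
      rw [uIcc_of_le hT, integrableOn_Icc_iff_integrableOn_Ioc]
      exact (intervalIntegrable_iff_integrableOn_Ioc_of_le hT).1 (hai i)
    exact ((hai i).mul_continuousOn
        (continuousOn_const.add (continuousOn_primitive_interval hIb))).add
      ((hbi i).continuousOn_mul
        (continuousOn_const.add (continuousOn_primitive_interval hIa)))
  rw [intervalIntegral.integral_finset_sum (fun i _ => hint i)]
  have final : ∀ i : Fin n, (∫ t in (0:ℝ)..T,
      ((fun s => a s i) t * (v 0 i + ∫ s in (0:ℝ)..t, b s i)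
        + (u 0 i + ∫ s in (0:ℝ)..t, a s i) * (fun s => b s i) t))
      = u T i * v T i - u 0 i * v 0 i := by
    intro i
    rw [ibp_scalar' T hT _ _ (u 0 i) (v 0 i) (hai i) (hbi i)]
    rw [hu T ⟨hT, le_rfl⟩, hv T ⟨hT, le_rfl⟩]
    rw [Pi.add_apply, Pi.add_apply, intervalIntegral_apply ha i, intervalIntegral_apply hb i]
  simp only [final]
  rw [Finset.sum_sub_distrib]
  rfl

lemma rep_all {n K : ℕ} {T : ℝ} (hT : 0 ≤ T) (x v : ℝ → Fin n → ℝ)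
    (hdiff : ∀ j < K, Differentiable ℝ (iteratedDeriv j x))
    (hint : IntervalIntegrable v volume 0 T)
    (hrep : ∀ t ∈ Icc (0:ℝ) T,
      iteratedDeriv K x t = iteratedDeriv K x 0 + ∫ s in (0:ℝ)..t, v s) :
    ∀ i ≤ K,
      IntervalIntegrable (if i = K then v else iteratedDeriv (i+1) x) volume 0 T ∧
      ∀ t ∈ Icc (0:ℝ) T, iteratedDeriv i x t = iteratedDeriv i x 0 +
        ∫ s in (0:ℝ)..t, (if i = K then v else iteratedDeriv (i+1) x) s := by
  suffices H : ∀ m i, i + m = K →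
      (IntervalIntegrable (if i = K then v else iteratedDeriv (i+1) x) volume 0 T ∧
      ∀ t ∈ Icc (0:ℝ) T, iteratedDeriv i x t = iteratedDeriv i x 0 +
        ∫ s in (0:ℝ)..t, (if i = K then v else iteratedDeriv (i+1) x) s) by
    intro i hi
    exact H (K-i) i (by omega)
  intro m
  induction m with
  | zero =>
    intro i hi
    simp only [Nat.add_zero] at hi
    subst hi
    simp only [if_pos rfl]
    exact ⟨hint, hrep⟩
  | succ m ih =>
    intro i hi
    have hilt : i < K := by omega
    obtain ⟨ihint, ihrep⟩ := ih (i+1) (by omega)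
    set g : ℝ → Fin n → ℝ := if i + 1 = K then v else iteratedDeriv (i+1+1) x with hg
    have hgIcc : IntegrableOn g (uIcc (0:ℝ) T) := by
      rw [uIcc_of_le hT, integrableOn_Icc_iff_integrableOn_Ioc]
      exact (intervalIntegrable_iff_integrableOn_Ioc_of_le hT).1 ihint
    have hcont : ContinuousOn (iteratedDeriv (i+1) x) (Icc (0:ℝ) T) := by
      have hc1 : ContinuousOn (fun t => iteratedDeriv (i+1) x 0 + ∫ s in (0:ℝ)..t, g s)
          (Icc (0:ℝ) T) := by
        apply continuousOn_const.add
        have := continuousOn_primitive_interval (f := g) (a := (0:ℝ)) (b := T) hgIcc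
        rwa [uIcc_of_le hT] at this
      exact hc1.congr (fun t ht => ihrep t ht)
    have hii : IntervalIntegrable (iteratedDeriv (i+1) x) volume 0 T := by
      apply ContinuousOn.intervalIntegrable
      rwa [uIcc_of_le hT]
    have hne : ¬ (i = K) := by omega
    refine ⟨by rwa [if_neg hne], ?_⟩
    intro t ht
    rw [if_neg hne]
    have hderiv : ∀ s ∈ uIcc (0:ℝ) t, HasDerivAt (iteratedDeriv i x)
        (iteratedDeriv (i+1) x s) s := by
      intro s _
      rw [iteratedDeriv_succ]
      exact ((hdiff i hilt) s).hasDerivAt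
    have hii' : IntervalIntegrable (iteratedDeriv (i+1) x) volume 0 t := by
      apply hii.mono_set
      rw [uIcc_of_le ht.1, uIcc_of_le hT]
      exact Icc_subset_Icc le_rfl ht.2
    have := intervalIntegral.integral_eq_sub_of_hasDerivAt hderiv hii'
    rw [this]
    abel

lemma cont_of_rep {n : ℕ} {T : ℝ} (hT : 0 ≤ T) {u a : ℝ → Fin n → ℝ}
    (ha : IntervalIntegrable a volume 0 T)
    (hu : ∀ t ∈ Icc (0:ℝ) T, u t = u 0 + ∫ s in (0:ℝ)..t, a s) :
    ContinuousOn u (Icc (0:ℝ) T) := by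
  have haIcc : IntegrableOn a (uIcc (0:ℝ) T) := by
    rw [uIcc_of_le hT, integrableOn_Icc_iff_integrableOn_Ioc]
    exact (intervalIntegrable_iff_integrableOn_Ioc_of_le hT).1 ha
  have hc1 : ContinuousOn (fun t => u 0 + ∫ s in (0:ℝ)..t, a s) (Icc (0:ℝ) T) := by
    apply continuousOn_const.add
    have := continuousOn_primitive_interval (f := a) (a := (0:ℝ)) (b := T) haIcc
    rwa [uIcc_of_le hT] at this
  exact hc1.congr hu

lemma ii_dot_cont {n : ℕ} {T : ℝ} (hT : 0 ≤ T) {a u : ℝ → Fin n → ℝ}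
    (ha : IntervalIntegrable a volume 0 T) (hu : ContinuousOn u (Icc (0:ℝ) T)) :
    IntervalIntegrable (fun t => a t ⬝ᵥ u t) volume 0 T := by
  have h1 : ∀ i ∈ Finset.univ (α := Fin n),
      IntervalIntegrable (fun t => a t i * u t i) volume 0 T := by
    intro i _
    apply (intervalIntegrable_apply ha i).mul_continuousOn
    rw [uIcc_of_le hT]
    exact (continuous_apply i).comp_continuousOn hu
  have h2 := IntervalIntegrable.sum Finset.univ h1
  have : (fun t => a t ⬝ᵥ u t)
      = ∑ i : Fin n, (fun t => a t i * u t i) := by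
    funext t
    rw [Finset.sum_apply]
    simp [dotProduct]
  rw [this]
  exact h2

lemma cont_dot_ii {n : ℕ} {T : ℝ} (hT : 0 ≤ T) {a u : ℝ → Fin n → ℝ}
    (ha : IntervalIntegrable a volume 0 T) (hu : ContinuousOn u (Icc (0:ℝ) T)) :
    IntervalIntegrable (fun t => u t ⬝ᵥ a t) volume 0 T := by
  have : (fun t => u t ⬝ᵥ a t) = fun t => a t ⬝ᵥ u t := by
    funext t; exact dotProduct_comm _ _
  rw [this]
  exact ii_dot_cont hT ha hu

lemma telescope {n K : ℕ} {T : ℝ} (hT : 0 ≤ T) (xt vt xs w : ℝ → Fin n → ℝ)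
    (hxd : ∀ j < K, Differentiable ℝ (iteratedDeriv j xt))
    (hvint : IntervalIntegrable vt volume 0 T)
    (hxrep : ∀ t ∈ Icc (0:ℝ) T,
      iteratedDeriv K xt t = iteratedDeriv K xt 0 + ∫ s in (0:ℝ)..t, vt s)
    (hsd : ∀ j < K, Differentiable ℝ (iteratedDeriv j xs))
    (hwint : IntervalIntegrable w volume 0 T)
    (hsrep : ∀ t ∈ Icc (0:ℝ) T,
      iteratedDeriv K xs t = iteratedDeriv K xs 0 + ∫ s in (0:ℝ)..t, w s) :
    ∫ t in (0:ℝ)..T, ((-1:ℝ)^(K+1) * (xt t ⬝ᵥ w t) - vt t ⬝ᵥ xs t)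
      = ∑ j ∈ Finset.range (K+1),
          ((-1:ℝ)^(j+1) * (iteratedDeriv (K-j) xt T ⬝ᵥ iteratedDeriv j xs T)
            - (-1:ℝ)^(j+1) * (iteratedDeriv (K-j) xt 0 ⬝ᵥ iteratedDeriv j xs 0)) := by
  set dx : ℕ → (ℝ → Fin n → ℝ) := fun i => if i = K then vt else iteratedDeriv (i+1) xt with hdx
  set ds : ℕ → (ℝ → Fin n → ℝ) := fun i => if i = K then w else iteratedDeriv (i+1) xs with hds
  have RX : ∀ i ≤ K, IntervalIntegrable (dx i) volume 0 T ∧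
      ∀ t ∈ Icc (0:ℝ) T, iteratedDeriv i xt t = iteratedDeriv i xt 0 +
        ∫ s in (0:ℝ)..t, dx i s := by
    exact rep_all hT xt vt hxd hvint hxrep
  have RS : ∀ i ≤ K, IntervalIntegrable (ds i) volume 0 T ∧
      ∀ t ∈ Icc (0:ℝ) T, iteratedDeriv i xs t = iteratedDeriv i xs 0 +
        ∫ s in (0:ℝ)..t, ds i s := by
    exact rep_all hT xs w hsd hwint hsrep
  have CX : ∀ i ≤ K, ContinuousOn (iteratedDeriv i xt) (Icc (0:ℝ) T) :=
    fun i hi => cont_of_rep hT (RX i hi).1 (RX i hi).2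
  have CS : ∀ i ≤ K, ContinuousOn (iteratedDeriv i xs) (Icc (0:ℝ) T) :=
    fun i hi => cont_of_rep hT (RS i hi).1 (RS i hi).2
  set c : ℕ → ℝ := fun j => ∫ t in (0:ℝ)..T, dx (K-j) t ⬝ᵥ iteratedDeriv j xs t with hc
  set d : ℕ → ℝ := fun j => ∫ t in (0:ℝ)..T, iteratedDeriv (K-j) xt t ⬝ᵥ ds j t with hd
  have hsplit : ∀ j ≤ K, c j + d j
      = iteratedDeriv (K-j) xt T ⬝ᵥ iteratedDeriv j xs T
        - iteratedDeriv (K-j) xt 0 ⬝ᵥ iteratedDeriv j xs 0 := by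
    intro j hj
    have h1 := ibp_vec T hT (iteratedDeriv (K-j) xt) (iteratedDeriv j xs)
      (dx (K-j)) (ds j) (RX (K-j) (by omega)).1 (RS j hj).1
      (RX (K-j) (by omega)).2 (RS j hj).2
    rw [← h1, intervalIntegral.integral_add
      (ii_dot_cont hT (RX (K-j) (by omega)).1 (CS j hj))
      (cont_dot_ii hT (RS j hj).1 (CX (K-j) (by omega)))]
  have hdc : ∀ j < K, d j = c (j+1) := by
    intro j hj
    have e1 : K - (j+1) + 1 = K - j := by omega
    have e2 : ¬ (K - (j+1) = K) := by omega
    have e3 : ¬ (j = K) := by omega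
    simp only [hc, hd, hdx, hds, if_neg e2, if_neg e3, e1]
  have hc0 : c 0 = ∫ t in (0:ℝ)..T, vt t ⬝ᵥ xs t := by
    simp only [hc, hdx, Nat.sub_zero, if_pos rfl, if_true, eq_self_iff_true, iteratedDeriv_zero]
  have hdK : d K = ∫ t in (0:ℝ)..T, xt t ⬝ᵥ w t := by
    simp only [hd, hds, Nat.sub_self, if_pos rfl, if_true, eq_self_iff_true, iteratedDeriv_zero]
  -- LHS computation
  have hwdot : IntervalIntegrable (fun t => xt t ⬝ᵥ w t) volume 0 T := by
    have := cont_dot_ii hT hwint (by simpa using CX 0 (Nat.zero_le K))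
    simpa using this
  have hvdot : IntervalIntegrable (fun t => vt t ⬝ᵥ xs t) volume 0 T := by
    have := ii_dot_cont hT hvint (by simpa using CS 0 (Nat.zero_le K))
    simpa using this
  have hLHS : ∫ t in (0:ℝ)..T, ((-1:ℝ)^(K+1) * (xt t ⬝ᵥ w t) - vt t ⬝ᵥ xs t)
      = (-1:ℝ)^(K+1) * d K - c 0 := by
    rw [hdK, hc0, intervalIntegral.integral_sub (hwdot.const_mul _) hvdot,
      intervalIntegral.integral_const_mul]
  rw [hLHS]
  have hRHS : ∑ j ∈ Finset.range (K+1),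
      ((-1:ℝ)^(j+1) * (iteratedDeriv (K-j) xt T ⬝ᵥ iteratedDeriv j xs T)
        - (-1:ℝ)^(j+1) * (iteratedDeriv (K-j) xt 0 ⬝ᵥ iteratedDeriv j xs 0))
      = ∑ j ∈ Finset.range (K+1), (-1:ℝ)^(j+1) * (c j + d j) := by
    apply Finset.sum_congr rfl
    intro j hj
    rw [hsplit j (by have := Finset.mem_range.1 hj; omega)]
    ring
  rw [hRHS]
  have S0 : ∑ j ∈ Finset.range (K+1), (-1:ℝ)^(j+1) * (c j + d j)
      = (∑ j ∈ Finset.range (K+1), ((-1:ℝ)^(j+1) * c j))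
        + ∑ j ∈ Finset.range (K+1), ((-1:ℝ)^(j+1) * d j) := by
    rw [← Finset.sum_add_distrib]
    exact Finset.sum_congr rfl fun j _ => by ring
  have S1 : ∑ j ∈ Finset.range (K+1), ((-1:ℝ)^(j+1) * c j)
      = (∑ j ∈ Finset.range K, ((-1:ℝ)^(j+1+1) * c (j+1))) + (-1:ℝ)^(0+1) * c 0 :=
    Finset.sum_range_succ' (fun j => (-1:ℝ)^(j+1) * c j) K
  have S2 : ∑ j ∈ Finset.range (K+1), ((-1:ℝ)^(j+1) * d j)
      = (∑ j ∈ Finset.range K, ((-1:ℝ)^(j+1) * d j)) + (-1:ℝ)^(K+1) * d K :=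
    Finset.sum_range_succ _ K
  have S3 : ∑ j ∈ Finset.range K, ((-1:ℝ)^(j+1) * d j)
      = - ∑ j ∈ Finset.range K, ((-1:ℝ)^(j+1+1) * c (j+1)) := by
    rw [← Finset.sum_neg_distrib]
    apply Finset.sum_congr rfl
    intro j hj
    rw [hdc j (Finset.mem_range.1 hj), pow_succ (-1:ℝ) (j+1)]
    ring
  rw [S0, S1, S2, S3]
  ring

end StrongDualityHelpers

/-- The substantive direction of Theorem 4.1 (strong duality): under the
hypotheses and conditions (a)–(d) of Theorem 3.1, the natural choices of dual
data are feasible for (PHC*) and the dual value equals the primal value. -/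
theorem strong_duality_PHC
    (n k : ℕ) (hn : 1 ≤ n) (hk : 1 ≤ k) (T : ℝ) (hT : 0 < T)
    (F : (Fin n → ℝ) → ℝ → Set (Fin n → ℝ))
    (S : Set ((Fin n → ℝ) × (Fin n → ℝ)))
    (X : ℝ → Set (Fin n → ℝ))
    (f : (Fin n → ℝ) → (Fin n → ℝ) → ℝ)
    (hF : ∀ t ∈ Icc (0:ℝ) T, Convex ℝ {p : (Fin n → ℝ) × (Fin n → ℝ) | p.2 ∈ F p.1 t})
    (hf : ConvexOn ℝ univ (fun p : (Fin n → ℝ) × (Fin n → ℝ) => f p.1 p.2))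
    (hS : Convex ℝ S)
    (hX : ∀ t ∈ Icc (0:ℝ) T, Convex ℝ (X t))
    (xt vt : ℝ → (Fin n → ℝ))
    (hfeas : IsFeasible n k T F S X xt vt)
    (xs w : ℝ → (Fin n → ℝ))
    (hadj : IsAdjointArc n k T xs w)
    (vs : ℝ → (Fin n → ℝ))
    -- conditions (a)-(b) of Theorem 3.1
    (hab : ∀ᵐ t ∂volume, t ∈ Icc (0:ℝ) T →
      (∀ y ∈ X t, 0 ≤ (y - xt t) ⬝ᵥ vs t) ∧
      (∀ ξ η, η ∈ F ξ t →
        (η - vt t) ⬝ᵥ xs t ≤ (((-1:ℝ)^k • w t - vs t) ⬝ᵥ (ξ - xt t))))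
    (p₀ p₁ μ₀ μ₁ : Fin n → ℝ)
    -- p ∈ ∂f(x̃(0), x̃(T))
    (hp : ∀ y₀ y₁, f (xt 0) (xt T) + (p₀ ⬝ᵥ (y₀ - xt 0) + p₁ ⬝ᵥ (y₁ - xt T)) ≤ f y₀ y₁)
    -- μ* ∈ K_S*(x̃(0), x̃(T))
    (hμ : ∀ s ∈ S, 0 ≤ (s.1 - xt 0) ⬝ᵥ μ₀ + (s.2 - xt T) ⬝ᵥ μ₁)
    -- condition (c)
    (hc0 : (-1:ℝ)^(k-1) • iteratedDeriv (k-1) xs 0 = p₀ - μ₀)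
    (hcT : (-1:ℝ)^k • iteratedDeriv (k-1) xs T = p₁ - μ₁)
    -- condition (d)
    (hd : ∀ j < k - 1, ∀ s ∈ S,
      0 ≤ (s.1 - iteratedDeriv (k-j-1) xt 0) ⬝ᵥ ((-1:ℝ)^(j+1) • iteratedDeriv j xs 0)
        + (s.2 - iteratedDeriv (k-j-1) xt T) ⬝ᵥ ((-1:ℝ)^j • iteratedDeriv j xs T))
    -- additional regularity of v*
    (hvsmeas : Measurable vs)
    (hvsint : IntervalIntegrable (fun t => xt t ⬝ᵥ vs t) volume 0 T) :
    -- (1) the choices m, ω, c_f, c_S, c_S^j satisfy the majorization conditions (i)–(v)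
    ((∀ᵐ t ∂volume, t ∈ Icc (0:ℝ) T → ∀ ξ η, η ∈ F ξ t →
        xt t ⬝ᵥ ((-1:ℝ)^k • w t - vs t) - vt t ⬝ᵥ xs t
          ≤ ξ ⬝ᵥ ((-1:ℝ)^k • w t - vs t) - η ⬝ᵥ xs t) ∧
      (∀ᵐ t ∂volume, t ∈ Icc (0:ℝ) T → ∀ ξ ∈ X t, ξ ⬝ᵥ (-vs t) ≤ -(xt t ⬝ᵥ vs t)) ∧
      (∀ y₀ y₁ : Fin n → ℝ,
        y₀ ⬝ᵥ ((-1:ℝ)^(k-1) • iteratedDeriv (k-1) xs 0 + μ₀)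
          + y₁ ⬝ᵥ (μ₁ + (-1:ℝ)^k • iteratedDeriv (k-1) xs T) - f y₀ y₁
          ≤ xt 0 ⬝ᵥ ((-1:ℝ)^(k-1) • iteratedDeriv (k-1) xs 0 + μ₀)
            + xt T ⬝ᵥ (μ₁ + (-1:ℝ)^k • iteratedDeriv (k-1) xs T) - f (xt 0) (xt T)) ∧
      (∀ s ∈ S, -(s.1 ⬝ᵥ μ₀) - s.2 ⬝ᵥ μ₁ ≤ -(xt 0 ⬝ᵥ μ₀) - xt T ⬝ᵥ μ₁) ∧
      (∀ j < k - 1, ∀ s ∈ S,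
        s.1 ⬝ᵥ ((-1:ℝ)^j • iteratedDeriv j xs 0)
          + s.2 ⬝ᵥ ((-1:ℝ)^(j+1) • iteratedDeriv j xs T)
          ≤ iteratedDeriv (k-1-j) xt 0 ⬝ᵥ ((-1:ℝ)^j • iteratedDeriv j xs 0)
            + iteratedDeriv (k-1-j) xt T ⬝ᵥ ((-1:ℝ)^(j+1) • iteratedDeriv j xs T)))
    ∧
    -- (2) the dual value equals the primal value
    (-(xt 0 ⬝ᵥ ((-1:ℝ)^(k-1) • iteratedDeriv (k-1) xs 0 + μ₀)
          + xt T ⬝ᵥ (μ₁ + (-1:ℝ)^k • iteratedDeriv (k-1) xs T) - f (xt 0) (xt T))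
      + (∫ t in (0:ℝ)..T, (xt t ⬝ᵥ ((-1:ℝ)^k • w t - vs t) - vt t ⬝ᵥ xs t))
      - (∫ t in (0:ℝ)..T, -(xt t ⬝ᵥ vs t))
      - (-(xt 0 ⬝ᵥ μ₀) - xt T ⬝ᵥ μ₁)
      - ∑ j ∈ Finset.range (k-1),
          (iteratedDeriv (k-1-j) xt 0 ⬝ᵥ ((-1:ℝ)^j • iteratedDeriv j xs 0)
            + iteratedDeriv (k-1-j) xt T ⬝ᵥ ((-1:ℝ)^(j+1) • iteratedDeriv j xs T))
      = f (xt 0) (xt T)) := by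
  obtain ⟨hxd, hvint, hxrep, hFae, hSmem, hXmem⟩ := hfeas
  obtain ⟨hsd, hwint, hsrep⟩ := hadj
  obtain ⟨K, rfl⟩ : ∃ K, k = K + 1 := ⟨k - 1, by omega⟩
  simp only [Nat.add_sub_cancel] at hxd hxrep hsd hsrep hc0 hcT ⊢
  refine ⟨⟨?_, ?_, ?_, ?_, ?_⟩, ?_⟩
  · -- (i)
    filter_upwards [hab] with t h ht ξ η hη
    have h2 := (h ht).2 ξ η hη
    have e1 : (η - vt t) ⬝ᵥ xs t = η ⬝ᵥ xs t - vt t ⬝ᵥ xs t :=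
      sub_dotProduct _ _ _
    have e2 : ((-1:ℝ)^(K+1) • w t - vs t) ⬝ᵥ (ξ - xt t)
        = ξ ⬝ᵥ ((-1:ℝ)^(K+1) • w t - vs t) - xt t ⬝ᵥ ((-1:ℝ)^(K+1) • w t - vs t) := by
      rw [dotProduct_sub, dotProduct_comm _ ξ, dotProduct_comm _ (xt t)]
    rw [e1, e2] at h2
    linarith
  · -- (ii)
    filter_upwards [hab] with t h ht ξ hξ
    have h1 := (h ht).1 ξ hξ
    rw [sub_dotProduct] at h1
    rw [dotProduct_neg]
    linarith
  · -- (iii)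
    intro y₀ y₁
    rw [hc0, hcT, sub_add_cancel, add_sub_cancel]
    have h3 := hp y₀ y₁
    have e1 : p₀ ⬝ᵥ (y₀ - xt 0) = y₀ ⬝ᵥ p₀ - xt 0 ⬝ᵥ p₀ := by
      rw [dotProduct_sub, dotProduct_comm p₀ y₀, dotProduct_comm p₀ (xt 0)]
    have e2 : p₁ ⬝ᵥ (y₁ - xt T) = y₁ ⬝ᵥ p₁ - xt T ⬝ᵥ p₁ := by
      rw [dotProduct_sub, dotProduct_comm p₁ y₁, dotProduct_comm p₁ (xt T)]
    rw [e1, e2] at h3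
    linarith
  · -- (iv)
    intro s hs
    have h4 := hμ s hs
    rw [sub_dotProduct, sub_dotProduct] at h4
    linarith
  · -- (v)
    intro j hj s hs
    have h5 := hd j (by omega) s hs
    rw [show K+1-j-1 = K-j from by omega] at h5
    rw [sub_dotProduct, sub_dotProduct] at h5
    simp only [dotProduct_smul, smul_eq_mul] at h5 ⊢
    rw [pow_succ] at h5 ⊢
    nlinarith [h5]
  · -- (2)
    have RX0 := rep_all hT.le xt vt hxd hvint hxrep 0 (Nat.zero_le K)
    have RS0 := rep_all hT.le xs w hsd hwint hsrep 0 (Nat.zero_le K)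
    have hcxt : ContinuousOn xt (Icc (0:ℝ) T) := by
      have := cont_of_rep hT.le RX0.1 RX0.2
      simpa [iteratedDeriv_zero] using this
    have hcxs : ContinuousOn xs (Icc (0:ℝ) T) := by
      have := cont_of_rep hT.le RS0.1 RS0.2
      simpa [iteratedDeriv_zero] using this
    have hIg : IntervalIntegrable
        (fun t => (-1:ℝ)^(K+1) * (xt t ⬝ᵥ w t) - vt t ⬝ᵥ xs t) volume 0 T :=
      ((cont_dot_ii hT.le hwint hcxt).const_mul _).sub (ii_dot_cont hT.le hvint hcxs)
    have e0 : ∀ t, xt t ⬝ᵥ ((-1:ℝ)^(K+1) • w t - vs t) - vt t ⬝ᵥ xs t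
        = ((-1:ℝ)^(K+1) * (xt t ⬝ᵥ w t) - vt t ⬝ᵥ xs t) - xt t ⬝ᵥ vs t := by
      intro t
      rw [dotProduct_sub, dotProduct_smul, smul_eq_mul]
      ring
    have I1 : ∫ t in (0:ℝ)..T, (xt t ⬝ᵥ ((-1:ℝ)^(K+1) • w t - vs t) - vt t ⬝ᵥ xs t)
        = (∫ t in (0:ℝ)..T, ((-1:ℝ)^(K+1) * (xt t ⬝ᵥ w t) - vt t ⬝ᵥ xs t))
          - ∫ t in (0:ℝ)..T, xt t ⬝ᵥ vs t := by
      simp only [e0]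
      exact intervalIntegral.integral_sub hIg hvsint
    have I2 : ∫ t in (0:ℝ)..T, -(xt t ⬝ᵥ vs t) = - ∫ t in (0:ℝ)..T, xt t ⬝ᵥ vs t :=
      intervalIntegral.integral_neg
    have htel := telescope hT.le xt vt xs w hxd hvint hxrep hsd hwint hsrep
    rw [I1, I2, htel]
    rw [Finset.sum_range_succ]
    have hPse : ∑ j ∈ Finset.range K,
        ((-1:ℝ)^(j+1) * (iteratedDeriv (K-j) xt T ⬝ᵥ iteratedDeriv j xs T)
          - (-1:ℝ)^(j+1) * (iteratedDeriv (K-j) xt 0 ⬝ᵥ iteratedDeriv j xs 0))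
        = ∑ j ∈ Finset.range K,
          (iteratedDeriv (K-j) xt 0 ⬝ᵥ ((-1:ℝ)^j • iteratedDeriv j xs 0)
            + iteratedDeriv (K-j) xt T ⬝ᵥ ((-1:ℝ)^(j+1) • iteratedDeriv j xs T)) := by
      apply Finset.sum_congr rfl
      intro j _
      rw [dotProduct_smul, dotProduct_smul, smul_eq_mul, smul_eq_mul,
        pow_succ]
      ring
    rw [hPse]
    simp only [Nat.sub_self, iteratedDeriv_zero]
    simp only [dotProduct_add, dotProduct_smul, smul_eq_mul]
    rw [pow_succ]
    ring
end
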